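/- arXiv:2308.03138 — 5 statements merged into one kernel-verified Lean document; each statement's English description precedes it below -/
import Mathlib

section
/- Let d ∈ ℕ, α > 0, let γ_u > 0 for each subset u ⊆ {1,…,d}, and let λ ∈ (0, α). For a prime p, define the good set G^{(p)} = { z ∈ {0,…,p−1}^d : Σ_{h ∈ ℤ^d∖{0}, h·z ≡ 0 (mod p)} r_{α,γ}(h)^{−1/λ} ≤ (4/p)·μ_λ }. Then |G^{(p)}| ≥ ⌈p^d/2⌉ ≥ 1. -/
open scoped BigOperators Classical ENNReal
open MeasureTheory
noncomputable def rfun (d : ℕ) (α : ℝ) (γ : Finset (Fin d) → ℝ) (h : Fin d → ℤ) : ℝ :=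
  (γ (Finset.univ.filter fun j => h j ≠ 0))⁻¹ *
    ∏ j ∈ Finset.univ.filter fun j => h j ≠ 0, |(h j : ℝ)| ^ α

/-- `μ_λ = Σ_{h ∈ ℤ^d \ {0}} r_{α,γ}(h)^(-1/λ)`. -/
noncomputable def mu (d : ℕ) (α : ℝ) (γ : Finset (Fin d) → ℝ) (lam : ℝ) : ℝ :=
  ∑' h : {h : Fin d → ℤ // h ≠ 0}, rfun d α γ h.1 ^ (-1 / lam)

/-- The good set `G^{(p)}` of generating vectors in `{0,...,p-1}^d`. -/
noncomputable def Gset (d : ℕ) (α : ℝ) (γ : Finset (Fin d) → ℝ) (lam : ℝ) (p : ℕ) :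
    Finset (Fin d → Fin p) :=
  Finset.univ.filter fun z =>
    (∑' h : {h : Fin d → ℤ // h ≠ 0 ∧ (p : ℤ) ∣ ∑ j, h j * ((z j : ℕ) : ℤ)},
      rfun d α γ h.1 ^ (-1 / lam)) ≤ 4 / p * mu d α γ lam

section aux

variable {d : ℕ} {α : ℝ} {γ : Finset (Fin d) → ℝ} {lam : ℝ}

lemma rfun_pos (hγ : ∀ u, 0 < γ u) (h : Fin d → ℤ) : 0 < rfun d α γ h := by
  apply mul_pos (inv_pos.2 (hγ _))
  apply Finset.prod_pos
  intro j hj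
  simp only [Finset.mem_filter] at hj
  exact Real.rpow_pos_of_pos (abs_pos.2 (Int.cast_ne_zero.2 hj.2)) α

lemma rfun_rpow_eq (hγ : ∀ u, 0 < γ u) (h : Fin d → ℤ) :
    rfun d α γ h ^ (-1 / lam) =
      γ (Finset.univ.filter fun j => h j ≠ 0) ^ (1 / lam) *
        ∏ j ∈ Finset.univ.filter fun j => h j ≠ 0, |(h j : ℝ)| ^ (-(α / lam)) := by
  set u := Finset.univ.filter fun j => h j ≠ 0 with hu
  have hprod : (0:ℝ) ≤ ∏ j ∈ u, |(h j : ℝ)| ^ α :=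
    Finset.prod_nonneg fun j _ => Real.rpow_nonneg (abs_nonneg _) _
  rw [rfun, Real.mul_rpow (inv_nonneg.2 (hγ u).le) hprod]
  congr 1
  · rw [Real.inv_rpow (hγ u).le, neg_div, Real.rpow_neg (hγ u).le, inv_inv]
  · rw [← Real.finset_prod_rpow u _ (fun j _ => Real.rpow_nonneg (abs_nonneg _) _)]
    refine Finset.prod_congr rfl fun j _ => ?_
    rw [← Real.rpow_mul (abs_nonneg _)]
    congr 1; ring

/-- the weight function -/
noncomputable def wfun (e : ℝ) (n : ℤ) : ℝ := if n = 0 then 1 else |(n:ℝ)| ^ (-e)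

lemma wfun_nonneg (e : ℝ) (n : ℤ) : 0 ≤ wfun e n := by
  unfold wfun; split_ifs
  · norm_num
  · exact Real.rpow_nonneg (abs_nonneg _) _

lemma summable_wfun {e : ℝ} (he : 1 < e) : Summable (wfun e) := by
  have h1 : Summable fun n : ℤ => |(n:ℝ)| ^ (-e) := Real.summable_abs_int_rpow he
  have h2 : Summable fun n : ℤ => if n = 0 then (1:ℝ) else 0 := by
    apply summable_of_finite_support
    apply Set.Finite.subset (Set.finite_singleton (0:ℤ))
    intro n hn
    simp only [Function.mem_support] at hn
    by_contra hne
    simp only [Set.mem_singleton_iff] at hne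
    exact hn (if_neg hne)
  apply (h1.add h2).congr
  intro n
  unfold wfun
  by_cases hn : n = 0
  · subst hn
    simp [Real.zero_rpow (by linarith : -e ≠ 0)]
  · simp [hn]

set_option maxHeartbeats 1000000 in
lemma summable_prod_wfun {w : ℤ → ℝ} (h0 : ∀ n, 0 ≤ w n) (hs : Summable w) :
    ∀ n : ℕ, Summable (fun h : Fin n → ℤ => ∏ j, w (h j)) := by
  intro n
  induction n with
  | zero => exact Summable.of_finite
  | succ n IH =>
    have key : Summable fun q : ℤ × (Fin n → ℤ) => w q.1 * ∏ j, w (q.2 j) := by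
      have := @Summable.mul_of_nonneg ℤ (Fin n → ℤ) w (fun h => ∏ j, w (h j)) hs IH ?_ ?_
      · exact this
      · exact h0
      · exact fun y => Finset.prod_nonneg fun j _ => h0 _
    rw [← (Fin.consEquiv (fun _ : Fin (n+1) => ℤ)).summable_iff]
    apply key.congr
    intro q
    simp only [Function.comp_apply, Fin.consEquiv_apply]
    rw [Fin.prod_univ_succ]
    simp [Fin.cons_zero, Fin.cons_succ]

lemma f_le_bound (hγ : ∀ u, 0 < γ u) (hlam0 : 0 < lam) (h : Fin d → ℤ) :
    rfun d α γ h ^ (-1 / lam) ≤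
      (∑ u : Finset (Fin d), γ u ^ (1 / lam)) * ∏ j, wfun (α / lam) (h j) := by
  rw [rfun_rpow_eq hγ]
  have h2 : ∏ j, wfun (α / lam) (h j) =
      ∏ j ∈ Finset.univ.filter fun j => h j ≠ 0, |(h j : ℝ)| ^ (-(α / lam)) := by
    rw [Finset.prod_filter]
    refine Finset.prod_congr rfl fun j _ => ?_
    unfold wfun
    by_cases hj : h j = 0 <;> simp [hj]
  rw [h2]
  apply mul_le_mul_of_nonneg_right
  · exact Finset.single_le_sum (fun u _ => Real.rpow_nonneg (hγ u).le _) (Finset.mem_univ _)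
  · exact Finset.prod_nonneg fun j _ => Real.rpow_nonneg (abs_nonneg _) _

lemma summable_f (hγ : ∀ u, 0 < γ u) (hα : 0 < α) (hlam : lam ∈ Set.Ioo 0 α) :
    Summable (fun h : Fin d → ℤ => rfun d α γ h ^ (-1 / lam)) := by
  have he : 1 < α / lam := (one_lt_div hlam.1).2 hlam.2
  apply Summable.of_nonneg_of_le
    (fun h => (Real.rpow_pos_of_pos (rfun_pos hγ h) _).le)
    (f_le_bound hγ hlam.1)
  exact (summable_prod_wfun (wfun_nonneg _) (summable_wfun he) d).mul_left _

lemma tsum_and_eq {τ : Type*} (P Q : τ → Prop) (g : τ → ℝ) :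
    ∑' (x : {h : τ // P h ∧ Q h}), g x.1 =
      ∑' (x : {h : τ // P h}), if Q x.1 then g x.1 else 0 := by
  let e : {x : {h : τ // P h} // Q x.1} ≃ {h : τ // P h ∧ Q h} :=
    ⟨fun x => ⟨x.1.1, x.1.2, x.2⟩, fun x => ⟨⟨x.1, x.2.1⟩, x.2.2⟩,
      fun x => rfl, fun x => rfl⟩
  rw [← Equiv.tsum_eq e (fun x : {h : τ // P h ∧ Q h} => g x.1)]
  have h1 : (∑' (c : {x : {h : τ // P h} // Q x.1}), g (e c).1) =
      ∑' (x : ({x : {h : τ // P h} | Q x.1} : Set {h : τ // P h})),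
        (fun y : {h : τ // P h} => g y.1) x := rfl
  rw [h1]
  refine (tsum_subtype {x : {h : τ // P h} | Q x.1} (fun y : {h : τ // P h} => g y.1)).trans ?_
  congr 1

lemma count_le {p : ℕ} (hp : p.Prime) (h : Fin d → ℤ) (j₀ : Fin d) (hj₀ : ¬ (p:ℤ) ∣ h j₀) :
    (Finset.univ.filter fun z : Fin d → Fin p =>
      (p:ℤ) ∣ ∑ j, h j * ((z j : ℕ) : ℤ)).card ≤ p ^ (d - 1) := by
  have hcard : Fintype.card {j : Fin d // j ≠ j₀} = d - 1 := by
    have := Fintype.card_subtype_compl (fun j : Fin d => j = j₀)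
    simp only [Fintype.card_subtype_eq, Fintype.card_fin] at this
    exact this
  have step : (Finset.univ.filter fun z : Fin d → Fin p =>
      (p:ℤ) ∣ ∑ j, h j * ((z j : ℕ) : ℤ)).card ≤
      (Finset.univ : Finset ({j : Fin d // j ≠ j₀} → Fin p)).card := by
    apply Finset.card_le_card_of_injOn (fun z => fun j => z j.1)
      (fun _ _ => Finset.mem_univ _)
    intro z hz z' hz' hzz
    simp only [Finset.coe_filter, Set.mem_setOf_eq, Finset.mem_univ, true_and] at hz hz'
    funext j
    by_cases hj : j = j₀
    · subst hj
      have hd1 : (p:ℤ) ∣ (∑ j, h j * ((z j : ℕ) : ℤ)) - ∑ j, h j * ((z' j : ℕ) : ℤ) :=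
        dvd_sub hz hz'
    
      rw [← Finset.sum_sub_distrib] at hd1
      rw [Finset.sum_eq_single j ?side1 ?side2] at hd1
      case side1 =>
        intro b _ hb
        have hzb : z b = z' b := congrFun hzz ⟨b, hb⟩
        rw [hzb]; ring
      case side2 =>
        intro habs; exact absurd (Finset.mem_univ _) habs
      rw [← mul_sub] at hd1
      rcases (Nat.prime_iff_prime_int.1 hp).dvd_mul.1 hd1 with h1 | h2
      · exact absurd h1 hj₀
      · have hz0 : ((z j : ℕ) : ℤ) - ((z' j : ℕ) : ℤ) = 0 := by
          apply Int.eq_zero_of_dvd_of_natAbs_lt_natAbs h2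
          have h1 := (z j).isLt
          have h2 := (z' j).isLt
          simp only [Int.natAbs_natCast]
          omega
        have : (z j : ℕ) = (z' j : ℕ) := by omega
        exact Fin.ext this
    · exact congrFun hzz ⟨j, hj⟩
  calc _ ≤ _ := step
    _ = p ^ (d - 1) := by
        rw [Finset.card_univ, Fintype.card_fun, Fintype.card_fin, hcard]

lemma scale_bound {p : ℕ} (hγ : ∀ u, 0 < γ u) (hα : 0 < α) (hlam : lam ∈ Set.Ioo 0 α)
    (hp2 : 2 ≤ p) (h : Fin d → ℤ) (hh : h ≠ 0) :
    rfun d α γ (fun j => (p:ℤ) * h j) ^ (-1 / lam) ≤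
      1 / p * rfun d α γ h ^ (-1 / lam) := by
  have hpR : (1:ℝ) < p := by exact_mod_cast Nat.lt_of_lt_of_le one_lt_two hp2
  have hpR0 : (0:ℝ) < p := lt_trans one_pos hpR
  have hpz : ((p:ℤ)) ≠ 0 := by positivity
  have he1 : 1 ≤ α / lam := le_of_lt ((one_lt_div hlam.1).2 hlam.2)
  set e := α / lam with hedef
  simp only [rfun_rpow_eq hγ]
  have hu : (Finset.univ.filter fun j => (p:ℤ) * h j ≠ 0) =
      Finset.univ.filter fun j => h j ≠ 0 := by
    apply Finset.filter_congr
    intro j _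
    simp [hpz]
    intro _; omega
  rw [hu]
  set u := Finset.univ.filter fun j => h j ≠ 0 with hudef
  have hune : u.Nonempty := by
    rcases Function.ne_iff.1 hh with ⟨j, hj⟩
    refine ⟨j, ?_⟩
    simp only [hudef, Finset.mem_filter, Finset.mem_univ, true_and]
    simpa using hj
  have hprod_eq : ∏ j ∈ u, |(((p:ℤ) * h j : ℤ) : ℝ)| ^ (-e) =
      ((p:ℝ) ^ (-e)) ^ u.card * ∏ j ∈ u, |(h j : ℝ)| ^ (-e) := by
    rw [← Finset.prod_const, ← Finset.prod_mul_distrib]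
    refine Finset.prod_congr rfl fun j _ => ?_
    push_cast
    rw [abs_mul, abs_of_pos hpR0, Real.mul_rpow hpR0.le (abs_nonneg _)]
  have hkey : ((p:ℝ) ^ (-e)) ^ u.card ≤ 1 / p := by
    have h1 : (p:ℝ) ^ (-e) ≤ 1 / p := by
      rw [Real.rpow_neg hpR0.le, one_div]
      apply inv_anti₀ hpR0
      calc (p:ℝ) = (p:ℝ) ^ (1:ℝ) := (Real.rpow_one _).symm
        _ ≤ (p:ℝ) ^ e := (Real.rpow_le_rpow_left_iff hpR).2 he1
    have h0 : 0 ≤ (p:ℝ) ^ (-e) := Real.rpow_nonneg hpR0.le _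
    have hle1 : (p:ℝ) ^ (-e) ≤ 1 :=
      Real.rpow_le_one_of_one_le_of_nonpos hpR.le (by linarith)
    calc ((p:ℝ) ^ (-e)) ^ u.card ≤ (p:ℝ) ^ (-e) :=
        pow_le_of_le_one h0 hle1 (Finset.card_pos.2 hune).ne'
      _ ≤ 1 / p := h1
  rw [hprod_eq]
  have hnn : 0 ≤ γ u ^ (1/lam) * ∏ j ∈ u, |(h j:ℝ)| ^ (-e) :=
    mul_nonneg (Real.rpow_nonneg (hγ u).le _)
      (Finset.prod_nonneg fun j _ => Real.rpow_nonneg (abs_nonneg _) _)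
  calc γ u ^ (1/lam) * (((p:ℝ)^(-e))^u.card * ∏ j ∈ u, |(h j:ℝ)|^(-e))
      = ((p:ℝ)^(-e))^u.card * (γ u ^ (1/lam) * ∏ j ∈ u, |(h j:ℝ)|^(-e)) := by ring
    _ ≤ 1/p * (γ u ^ (1/lam) * ∏ j ∈ u, |(h j:ℝ)|^(-e)) :=
        mul_le_mul_of_nonneg_right hkey hnn

end aux

set_option maxHeartbeats 2000000 in
theorem stmt0 (d : ℕ) (α : ℝ) (hα : 0 < α) (γ : Finset (Fin d) → ℝ)
    (hγ : ∀ u, 0 < γ u) (lam : ℝ) (hlam : lam ∈ Set.Ioo 0 α)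
    (p : ℕ) (hp : p.Prime) :
    ⌈((p : ℝ) ^ d) / 2⌉ ≤ ((Gset d α γ lam p).card : ℤ) ∧
      1 ≤ ⌈((p : ℝ) ^ d) / 2⌉ := by
  have hp2 : 2 ≤ p := hp.two_le
  have hpR1 : (1:ℝ) < p := by exact_mod_cast Nat.lt_of_lt_of_le one_lt_two hp2
  have hpR0 : (0:ℝ) < p := lt_trans one_pos hpR1
  have hpdpos : (0:ℝ) < (p:ℝ)^d / 2 := by positivity
  have hceil1 : 1 ≤ ⌈((p : ℝ) ^ d) / 2⌉ := by
    have := Int.ceil_pos.mpr hpdpos; omega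
  refine ⟨?_, hceil1⟩
  have hμ0 : 0 ≤ mu d α γ lam :=
    tsum_nonneg fun x => Real.rpow_nonneg (rfun_pos hγ x.1).le _
  by_cases hd : d = 0
  · subst hd
    have hGs : Gset 0 α γ lam p = Finset.univ := by
      rw [Gset, Finset.filter_true_of_mem]
      intro z _
      haveI hemp : IsEmpty {h : Fin 0 → ℤ // h ≠ 0 ∧ (p:ℤ) ∣ ∑ j, h j * ((z j : ℕ):ℤ)} :=
        ⟨fun x => x.2.1 (funext fun j => j.elim0)⟩
      rw [tsum_empty]
      exact mul_nonneg (by positivity) hμ0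
    rw [hGs, Finset.card_univ]
    have hone : Fintype.card (Fin 0 → Fin p) = 1 := by simp
    rw [hone, pow_zero]
    exact Int.ceil_le.2 (by norm_num)
  · have hd1 : 0 < d := Nat.pos_of_ne_zero hd
    set f : (Fin d → ℤ) → ℝ := fun h => rfun d α γ h ^ (-1/lam) with hfdef
    have hf0 : ∀ h, 0 ≤ f h := fun h => Real.rpow_nonneg (rfun_pos hγ h).le _
    have hfpos : ∀ h, 0 < f h := fun h => Real.rpow_pos_of_pos (rfun_pos hγ h) _
    have hfs : Summable f := summable_f hγ hα hlam
    have hfsH : Summable fun x : {h : Fin d → ℤ // h ≠ 0} => f x.1 := hfs.subtype _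
    have hmu_eq : mu d α γ lam = ∑' (x : {h : Fin d → ℤ // h ≠ 0}), f x.1 := rfl
    have hμpos : 0 < mu d α γ lam := by
      rw [hmu_eq]
      refine Summable.tsum_pos hfsH (fun x => hf0 _) ⟨fun _ => 1, ?_⟩ (hfpos _)
      intro hzero
      have := congrFun hzero ⟨0, hd1⟩
      simp at this
    let Q : (Fin d → Fin p) → (Fin d → ℤ) → Prop :=
      fun z h => (p:ℤ) ∣ ∑ j, h j * ((z j : ℕ):ℤ)
    let S : (Fin d → Fin p) → ℝ := fun z => ∑' (x : {h : Fin d → ℤ // h ≠ 0 ∧ Q z h}), f x.1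
    have hGdef : Gset d α γ lam p =
        Finset.univ.filter (fun z => S z ≤ 4/p * mu d α γ lam) := rfl
    have hSnonneg : ∀ z, 0 ≤ S z := fun z => tsum_nonneg fun x => hf0 _
    have hS_eq : ∀ z, S z = ∑' (x : {h : Fin d → ℤ // h ≠ 0}), if Q z x.1 then f x.1 else 0 :=
      fun z => (tsum_and_eq _ _ f).trans (tsum_congr fun x => by split_ifs <;> rfl)
    let Nc : (Fin d → ℤ) → ℕ := fun h => (Finset.univ.filter fun z : Fin d → Fin p => Q z h).card
    have hNle' : ∀ h, Nc h ≤ p^d := by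
      intro h
      calc Nc h ≤ (Finset.univ : Finset (Fin d → Fin p)).card := Finset.card_filter_le _ _
        _ = p ^ d := by rw [Finset.card_univ, Fintype.card_fun, Fintype.card_fin, Fintype.card_fin]
    have hFz_summ : ∀ z, Summable fun x : {h : Fin d → ℤ // h ≠ 0} =>
        if Q z x.1 then f x.1 else 0 := by
      intro z
      apply Summable.of_nonneg_of_le _ _ hfsH
      · intro x; split_ifs; exacts [hf0 _, le_rfl]
      · intro x; split_ifs; exacts [le_rfl, hf0 _]
    have hexchange : ∑ z : Fin d → Fin p, S z =
        ∑' (x : {h : Fin d → ℤ // h ≠ 0}), (Nc x.1 : ℝ) * f x.1 := by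
      calc ∑ z : Fin d → Fin p, S z
          = ∑ z : Fin d → Fin p, ∑' (x : {h : Fin d → ℤ // h ≠ 0}),
              (if Q z x.1 then f x.1 else 0) := Finset.sum_congr rfl fun z _ => hS_eq z
        _ = ∑' (x : {h : Fin d → ℤ // h ≠ 0}), ∑ z : Fin d → Fin p,
              (if Q z x.1 then f x.1 else 0) := (Summable.tsum_finsetSum (fun z _ => hFz_summ z)).symm
        _ = _ := by
            apply tsum_congr
            intro x
            rw [← Finset.sum_filter, Finset.sum_const, nsmul_eq_mul]
    let P2 : (Fin d → ℤ) → Prop := fun h => ∀ j, (p:ℤ) ∣ h j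
    have hpzZ : ((p:ℤ)) ≠ 0 := by positivity
    let e2 : {h : Fin d → ℤ // h ≠ 0} ≃ {h : Fin d → ℤ // h ≠ 0 ∧ P2 h} :=
      { toFun := fun x => ⟨fun j => (p:ℤ) * x.1 j, by
          refine ⟨?_, fun j => ⟨x.1 j, rfl⟩⟩
          intro hzero
          apply x.2
          funext j
          have h0 : (p:ℤ) * x.1 j = 0 := by simpa using congrFun hzero j
          rcases mul_eq_zero.1 h0 with h|h
          · exact absurd h hpzZ
          · simpa using h⟩
        invFun := fun y => ⟨fun j => y.1 j / p, by
          intro hzero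
          apply y.2.1
          funext j
          have h0 : y.1 j / (p:ℤ) = 0 := by simpa using congrFun hzero j
          have hcan := Int.ediv_mul_cancel (y.2.2 j)
          rw [h0] at hcan
          simpa using hcan.symm⟩
        left_inv := fun x => Subtype.ext (funext fun j => Int.mul_ediv_cancel_left _ hpzZ)
        right_inv := fun y => Subtype.ext (funext fun j => Int.mul_ediv_cancel' (y.2.2 j)) }
    have htail_summ : Summable fun x : {h : Fin d → ℤ // h ≠ 0 ∧ P2 h} => f x.1 :=
      hfs.subtype _
    have htail : ∑' (x : {h : Fin d → ℤ // h ≠ 0 ∧ P2 h}), f x.1 ≤ 1/p * mu d α γ lam := by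
      rw [← Equiv.tsum_eq e2 (fun y : {h : Fin d → ℤ // h ≠ 0 ∧ P2 h} => f y.1)]
      have hle : ∀ x : {h : Fin d → ℤ // h ≠ 0},
          (fun y : {h : Fin d → ℤ // h ≠ 0 ∧ P2 h} => f y.1) (e2 x) ≤ 1/p * f x.1 :=
        fun x => scale_bound hγ hα hlam hp2 x.1 x.2
      refine le_trans (Summable.tsum_le_tsum hle ?_ ?_) ?_
      · exact (Equiv.summable_iff e2).2 htail_summ
      · exact hfsH.mul_left _
      · rw [tsum_mul_left, ← hmu_eq]
    have hmain : ∑ z : Fin d → Fin p, S z ≤ 2 * (p:ℝ)^(d-1) * mu d α γ lam := by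
      rw [hexchange]
      have hBsum1 : Summable fun x : {h : Fin d → ℤ // h ≠ 0} => (p:ℝ)^(d-1) * f x.1 :=
        hfsH.mul_left _
      have hBsum2 : Summable fun x : {h : Fin d → ℤ // h ≠ 0} =>
          (if P2 x.1 then (p:ℝ)^d * f x.1 else 0) := by
        apply Summable.of_nonneg_of_le _ _ (hfsH.mul_left ((p:ℝ)^d))
        · intro x; split_ifs
          · exact mul_nonneg (by positivity) (hf0 _)
          · exact le_rfl
        · intro x; split_ifs
          · exact le_rfl
          · exact mul_nonneg (by positivity) (hf0 _)
      have hptw : ∀ x : {h : Fin d → ℤ // h ≠ 0}, (Nc x.1:ℝ) * f x.1 ≤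
          (p:ℝ)^(d-1) * f x.1 + (if P2 x.1 then (p:ℝ)^d * f x.1 else 0) := by
        intro x
        by_cases hx : P2 x.1
        · rw [if_pos hx]
          have hcast : (Nc x.1 : ℝ) ≤ (p:ℝ)^d := by exact_mod_cast hNle' x.1
          have t1 : (Nc x.1:ℝ) * f x.1 ≤ (p:ℝ)^d * f x.1 :=
            mul_le_mul_of_nonneg_right hcast (hf0 _)
          have t2 : 0 ≤ (p:ℝ)^(d-1) * f x.1 := mul_nonneg (by positivity) (hf0 _)
          linarith
        · rw [if_neg hx, add_zero]
          simp only [P2] at hx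
          push_neg at hx
          obtain ⟨j₀, hj₀⟩ := hx
          have hcount := count_le hp x.1 j₀ hj₀
          have hcast : (Nc x.1 : ℝ) ≤ (p:ℝ)^(d-1) := by exact_mod_cast hcount
          exact mul_le_mul_of_nonneg_right hcast (hf0 _)
      have hsummN : Summable fun x : {h : Fin d → ℤ // h ≠ 0} => (Nc x.1:ℝ) * f x.1 := by
        apply Summable.of_nonneg_of_le _ _ (hfsH.mul_left ((p:ℝ)^d))
        · intro x; exact mul_nonneg (Nat.cast_nonneg _) (hf0 _)
        · intro x
          exact mul_le_mul_of_nonneg_right (by exact_mod_cast hNle' x.1) (hf0 _)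
      calc ∑' (x : {h : Fin d → ℤ // h ≠ 0}), (Nc x.1:ℝ) * f x.1
          ≤ ∑' (x : {h : Fin d → ℤ // h ≠ 0}),
              ((p:ℝ)^(d-1) * f x.1 + if P2 x.1 then (p:ℝ)^d * f x.1 else 0) :=
            Summable.tsum_le_tsum hptw hsummN (hBsum1.add hBsum2)
        _ = (p:ℝ)^(d-1) * mu d α γ lam + ∑' (x : {h : Fin d → ℤ // h ≠ 0}),
              (if P2 x.1 then (p:ℝ)^d * f x.1 else 0) := by
            rw [Summable.tsum_add hBsum1 hBsum2, tsum_mul_left, ← hmu_eq]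
        _ ≤ (p:ℝ)^(d-1) * mu d α γ lam + (p:ℝ)^d * (1/p * mu d α γ lam) := by
            have heq : ∑' (x : {h : Fin d → ℤ // h ≠ 0}),
                (if P2 x.1 then (p:ℝ)^d * f x.1 else 0) =
                (p:ℝ)^d * ∑' (x : {h : Fin d → ℤ // h ≠ 0 ∧ P2 h}), f x.1 := by
              have h1 := tsum_and_eq (fun h : Fin d → ℤ => h ≠ 0) P2 (fun h => (p:ℝ)^d * f h)
              rw [tsum_mul_left] at h1
              refine Eq.trans (tsum_congr fun x => ?_) h1.symm
              split_ifs <;> rfl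
            rw [heq]
            have := mul_le_mul_of_nonneg_left htail (by positivity : (0:ℝ) ≤ (p:ℝ)^d)
            linarith
        _ = 2 * (p:ℝ)^(d-1) * mu d α γ lam := by
            have hpd : (p:ℝ)^d = (p:ℝ)^(d-1) * p := by
              rw [← pow_succ]
              congr 1
              omega
            rw [hpd]
            field_simp
            ring
    set Bset := Finset.univ.filter fun z : Fin d → Fin p =>
      ¬ (S z ≤ 4/p * mu d α γ lam) with hBdef
    have hcards : (Gset d α γ lam p).card + Bset.card = p ^ d := by
      rw [hGdef, hBdef, Finset.card_filter_add_card_filter_not,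
        Finset.card_univ, Fintype.card_fun, Fintype.card_fin, Fintype.card_fin]
    have hBb : (Bset.card : ℝ) * (4/p * mu d α γ lam) ≤ 2 * (p:ℝ)^(d-1) * mu d α γ lam := by
      calc (Bset.card : ℝ) * (4/p * mu d α γ lam)
          = ∑ _z ∈ Bset, (4/p * mu d α γ lam) := by rw [Finset.sum_const, nsmul_eq_mul]
        _ ≤ ∑ z ∈ Bset, S z := Finset.sum_le_sum (fun z hz => by
            have hzz := (Finset.mem_filter.1 hz).2
            exact (not_le.1 hzz).le)
        _ ≤ ∑ z : Fin d → Fin p, S z :=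
            Finset.sum_le_sum_of_subset_of_nonneg (Finset.subset_univ _)
              (fun z _ _ => hSnonneg z)
        _ ≤ _ := hmain
    have hBle : (Bset.card : ℝ) ≤ (p:ℝ)^d / 2 := by
      have hc : 0 < 4/(p:ℝ) * mu d α γ lam := by positivity
      rw [← mul_le_mul_iff_of_pos_right hc]
      calc (Bset.card:ℝ) * (4/p * mu d α γ lam) ≤ 2 * (p:ℝ)^(d-1) * mu d α γ lam := hBb
        _ = (p:ℝ)^d/2 * (4/p * mu d α γ lam) := by
            have hpd : (p:ℝ)^d = (p:ℝ)^(d-1) * p := by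
              rw [← pow_succ]
              congr 1
              omega
            rw [hpd]
            field_simp
            ring
    have hGge : ((p:ℝ)^d)/2 ≤ ((Gset d α γ lam p).card : ℝ) := by
      have hcR : ((Gset d α γ lam p).card : ℝ) + (Bset.card : ℝ) = (p:ℝ)^d := by
        exact_mod_cast hcards
      linarith
    exact Int.ceil_le.2 (by exact_mod_cast hGge)
end

section
/- Let d ∈ ℕ, α > 0, let γ_u > 0 for each subset u ⊆ {1,…,d}, and let λ ∈ (0, α). Then the family (r_{α,γ}(h)^{−1/λ})_{h ∈ ℤ^d∖{0}} is summable and Σ_{h ∈ ℤ^d∖{0}} r_{α,γ}(h)^{−1/λ} = Σ_{∅ ≠ u ⊆ {1,…,d}} γ_u^{1/λ} · (2·ζ(α/λ))^{|u|}, where ζ denotes the Riemann zeta function. -/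
open scoped BigOperators Classical ENNReal
open MeasureTheory

lemma tsum_pi_fin {κ : Type*} : ∀ (n : ℕ) (g : Fin n → κ → ℝ≥0∞),
    ∑' x : Fin n → κ, ∏ j, g j (x j) = ∏ j, ∑' y, g j y := by
  intro n
  induction n with
  | zero =>
    intro g
    simp only [Finset.univ_eq_empty, Finset.prod_empty]
    exact tsum_eq_single default fun b hb => absurd (Subsingleton.elim b default) hb
  | succ n ih =>
    intro g
    rw [← (Fin.consEquiv fun _ : Fin (n+1) => κ).tsum_eq]
    have h1 : ∀ c : κ × (Fin n → κ),
        (∏ j, g j ((Fin.consEquiv fun _ : Fin (n+1) => κ) c j))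
          = g 0 c.1 * ∏ j, g j.succ (c.2 j) := by
      intro c
      rw [Fin.prod_univ_succ]
      rfl
    rw [tsum_congr h1, ENNReal.tsum_prod']
    calc ∑' (a : κ) (b : Fin n → κ), g 0 a * ∏ j, g j.succ (b j)
        = ∑' (a : κ), g 0 a * ∑' (b : Fin n → κ), ∏ j, g j.succ (b j) := by
          exact tsum_congr fun a => ENNReal.tsum_mul_left
      _ = (∑' a, g 0 a) * ∑' (b : Fin n → κ), ∏ j, g j.succ (b j) := ENNReal.tsum_mul_right
      _ = _ := by rw [ih fun j => g j.succ, Fin.prod_univ_succ]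

open Complex in
lemma zeta_real (s : ℝ) (hs : 1 < s) :
    ((∑' n : ℕ, ((n : ℝ) + 1) ^ (-s) : ℝ) : ℂ) = riemannZeta (s : ℂ) := by
  rw [zeta_eq_tsum_one_div_nat_add_one_cpow (by simpa using hs), ofReal_tsum]
  refine tsum_congr fun n => ?_
  have h0 : (0:ℝ) ≤ (n:ℝ) + 1 := by positivity
  rw [ofReal_cpow h0, ofReal_neg, cpow_neg]
  push_cast
  rw [one_div]

set_option maxHeartbeats 1000000 in
lemma int_sum_eq (s : ℝ) (hs : 1 < s) :
    ∑' n : ℤ, |(n:ℝ)| ^ (-s) = 2 * ∑' n : ℕ, ((n : ℝ) + 1) ^ (-s) := by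
  have hnat : Summable fun n : ℕ => |((n:ℤ):ℝ)| ^ (-s) :=
    (Real.summable_abs_int_rpow hs).comp_injective (fun a b => by exact_mod_cast fun h => h)
  have hneg : Summable fun n : ℕ => |((-(n+1) : ℤ) : ℝ)| ^ (-s) :=
    (Real.summable_abs_int_rpow hs).comp_injective (fun a b => by omega)
  rw [tsum_of_nat_of_neg_add_one hnat hneg]
  have e1 : ∑' n : ℕ, |((n:ℤ):ℝ)| ^ (-s) = ∑' n : ℕ, ((n:ℝ)+1) ^ (-s) := by
    rw [Summable.tsum_eq_zero_add hnat]
    have h0 : |(((0:ℕ):ℤ):ℝ)| ^ (-s) = 0 := by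
      norm_num; exact Real.zero_rpow (by linarith)
    rw [h0, zero_add]
    exact tsum_congr fun n => by
      push_cast
      rw [abs_of_nonneg (by positivity : (0:ℝ) ≤ (n:ℝ)+1)]
  have e2 : ∑' n : ℕ, |((-(↑n+1) : ℤ):ℝ)| ^ (-s) = ∑' n : ℕ, ((n:ℝ)+1) ^ (-s) :=
    tsum_congr fun n => by
      push_cast
      rw [abs_neg, abs_of_nonneg (by positivity : (0:ℝ) ≤ (n:ℝ)+1)]
  rw [e1, e2]; ring

set_option maxHeartbeats 2000000 in
theorem stmt4 (d : ℕ) (α : ℝ) (hα : 0 < α) (γ : Finset (Fin d) → ℝ)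
    (hγ : ∀ u, 0 < γ u) (lam : ℝ) (hlam : lam ∈ Set.Ioo 0 α) :
    Summable (fun h : {h : Fin d → ℤ // h ≠ 0} => rfun d α γ h.1 ^ (-1 / lam)) ∧
    ((mu d α γ lam : ℝ) : ℂ) =
      ∑ u ∈ Finset.univ.powerset.filter fun u : Finset (Fin d) => u ≠ ∅,
        ((γ u ^ (1 / lam) : ℝ) : ℂ) * (2 * riemannZeta ((α / lam : ℝ) : ℂ)) ^ u.card := by
  obtain ⟨hlam0, hlamα⟩ := hlam
  set s : ℝ := α / lam with hs_def
  have hs1 : 1 < s := (one_lt_div hlam0).mpr hlamα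
  have hZsum : Summable fun n : ℤ => |(n:ℝ)| ^ (-s) := Real.summable_abs_int_rpow hs1
  set ZR : ℝ := ∑' n : ℤ, |(n:ℝ)| ^ (-s) with hZR_def
  have hZR0 : 0 ≤ ZR := tsum_nonneg fun n => Real.rpow_nonneg (abs_nonneg _) _
  set S : Finset (Finset (Fin d)) :=
    Finset.univ.powerset.filter (fun u : Finset (Fin d) => u ≠ ∅) with hS_def
  -- key rpow computation
  have hkey : ∀ h : Fin d → ℤ,
      rfun d α γ h ^ (-1/lam)
        = γ (Finset.univ.filter fun j => h j ≠ 0) ^ (1/lam)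
          * ∏ j ∈ Finset.univ.filter fun j => h j ≠ 0, |((h j : ℤ):ℝ)| ^ (-s) := by
    intro h
    set u := Finset.univ.filter fun j => h j ≠ 0 with hu
    have habs : ∀ j ∈ u, (0:ℝ) < |((h j : ℤ):ℝ)| := fun j hj =>
      abs_pos.mpr (Int.cast_ne_zero.mpr (Finset.mem_filter.mp hj).2)
    rw [rfun, Real.mul_rpow (inv_nonneg.mpr (hγ u).le)
      (Finset.prod_nonneg fun j hj => Real.rpow_nonneg (abs_nonneg _) _)]
    congr 1
    · rw [Real.inv_rpow (hγ u).le, neg_div, Real.rpow_neg (hγ u).le, inv_inv]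
    · rw [← Real.finset_prod_rpow u _ (fun j hj => Real.rpow_nonneg (abs_nonneg _) _) _]
      refine Finset.prod_congr rfl fun j hj => ?_
      rw [← Real.rpow_mul (abs_nonneg _)]
      congr 1
      rw [hs_def]; ring
    done
  -- positivity of rfun-term
  have hpos : ∀ h : Fin d → ℤ, 0 < rfun d α γ h ^ (-1/lam) := by
    intro h
    have : 0 < rfun d α γ h := by
      refine mul_pos (inv_pos.mpr (hγ _)) (Finset.prod_pos fun j hj => ?_)
      exact Real.rpow_pos_of_pos
        (abs_pos.mpr (Int.cast_ne_zero.mpr (Finset.mem_filter.mp hj).2)) _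
    exact Real.rpow_pos_of_pos this _
  -- the per-coordinate factors
  set g : Finset (Fin d) → Fin d → ℤ → ℝ≥0∞ := fun u j n =>
    if j ∈ u then (if n = 0 then 0 else ENNReal.ofReal (|(n:ℝ)| ^ (-s)))
    else (if n = 0 then 1 else 0) with hg_def
  set F : (Fin d → ℤ) → ℝ≥0∞ := fun h =>
    if h = 0 then 0 else ENNReal.ofReal (rfun d α γ h ^ (-1/lam)) with hF_def
  -- product evaluation
  have hprod_eq : ∀ (h : Fin d → ℤ),
      (Finset.univ.filter fun j => h j ≠ 0) ∈ S →
      (∏ j, g (Finset.univ.filter fun j => h j ≠ 0) j (h j))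
        = ENNReal.ofReal (∏ j ∈ Finset.univ.filter fun j => h j ≠ 0, |((h j : ℤ):ℝ)| ^ (-s)) := by
    intro h _
    set u := Finset.univ.filter fun j => h j ≠ 0 with hu
    rw [← Finset.prod_mul_prod_compl u]
    have h2 : ∏ j ∈ uᶜ, g u j (h j) = 1 := by
      refine Finset.prod_eq_one fun j hj => ?_
      have hju : j ∉ u := Finset.mem_compl.mp hj
      have hj0 : h j = 0 := by
        by_contra hc
        exact hju (Finset.mem_filter.mpr ⟨Finset.mem_univ j, hc⟩)
      simp [hg_def, hju, hj0]
    have h1 : ∏ j ∈ u, g u j (h j)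
        = ∏ j ∈ u, ENNReal.ofReal (|((h j : ℤ):ℝ)| ^ (-s)) := by
      refine Finset.prod_congr rfl fun j hj => ?_
      have hj0 : h j ≠ 0 := (Finset.mem_filter.mp hj).2
      simp [hg_def, hj, hj0]
    rw [h1, h2, mul_one, ENNReal.ofReal_prod_of_nonneg
      (fun j hj => Real.rpow_nonneg (abs_nonneg _) _)]
  have hprod_ne : ∀ (h : Fin d → ℤ) (u : Finset (Fin d)),
      u ≠ (Finset.univ.filter fun j => h j ≠ 0) →
      (∏ j, g u j (h j)) = 0 := by
    intro h u hne
    have : ∃ j, ¬ ((j ∈ u) ↔ (j ∈ Finset.univ.filter fun j => h j ≠ 0)) := by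
      by_contra hc
      push_neg at hc
      exact hne (Finset.ext fun j => hc j)
    obtain ⟨j, hj⟩ := this
    refine Finset.prod_eq_zero (Finset.mem_univ j) ?_
    by_cases hju : j ∈ u
    · have hj0 : h j = 0 := by
        by_contra hc
        exact hj (iff_of_true hju (Finset.mem_filter.mpr ⟨Finset.mem_univ j, hc⟩))
      simp [hg_def, hju, hj0]
    · have hj0 : h j ≠ 0 := by
        intro hc
        refine hj (iff_of_false hju fun hmem => ?_)
        exact (Finset.mem_filter.mp hmem).2 hc
      simp [hg_def, hju, hj0]
  -- pointwise decomposition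
  have hpoint : ∀ h : Fin d → ℤ,
      F h = ∑ u ∈ S, ENNReal.ofReal (γ u ^ (1/lam)) * ∏ j, g u j (h j) := by
    intro h
    by_cases h0 : h = 0
    · subst h0
      rw [hF_def]
      simp only [if_pos rfl]
      refine (Finset.sum_eq_zero fun u hu => ?_).symm
      have hune : u ≠ ∅ := (Finset.mem_filter.mp hu).2
      have : u ≠ (Finset.univ.filter fun j => (0 : Fin d → ℤ) j ≠ 0) := by
        simpa using hune
      rw [hprod_ne _ u this, mul_zero]
    · have hmem : (Finset.univ.filter fun j => h j ≠ 0) ∈ S := by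
        rw [hS_def, Finset.mem_filter]
        refine ⟨Finset.mem_powerset.mpr (Finset.filter_subset _ _), ?_⟩
        obtain ⟨j, hj⟩ := Function.ne_iff.mp h0
        exact Finset.ne_empty_of_mem (Finset.mem_filter.mpr ⟨Finset.mem_univ j, hj⟩)
      rw [Finset.sum_eq_single (Finset.univ.filter fun j => h j ≠ 0)
        (fun u _ hu => by rw [hprod_ne h u hu, mul_zero])
        (fun hc => absurd hmem hc)]
      rw [hprod_eq h hmem, hF_def]
      simp only [if_neg h0]
      rw [hkey h, ENNReal.ofReal_mul (Real.rpow_nonneg (hγ _).le _)]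
  -- per-subset tsum
  have htsum_u : ∀ u : Finset (Fin d),
      (∑' h : Fin d → ℤ, ∏ j, g u j (h j)) = ENNReal.ofReal ZR ^ u.card := by
    intro u
    rw [tsum_pi_fin d (g u)]
    have hcol : ∀ j : Fin d, (∑' n : ℤ, g u j n)
        = if j ∈ u then ENNReal.ofReal ZR else 1 := by
      intro j
      by_cases hju : j ∈ u
      · rw [if_pos hju]
        have : ∀ n : ℤ, g u j n = ENNReal.ofReal (|(n:ℝ)| ^ (-s)) := by
          intro n
          by_cases hn : n = 0
          · subst hn
            simp [hg_def, hju, Real.zero_rpow (by linarith : -s ≠ 0)]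
          · simp [hg_def, hju, hn]
        rw [tsum_congr this, hZR_def,
          ← ENNReal.ofReal_tsum_of_nonneg (fun n => Real.rpow_nonneg (abs_nonneg _) _) hZsum]
      · rw [if_neg hju]
        have : ∀ n : ℤ, g u j n = if n = 0 then 1 else 0 := fun n => by
          simp [hg_def, hju]
        rw [tsum_congr this]
        rw [tsum_eq_single 0 (fun n hn => by rw [if_neg hn])]
        simp
    rw [Finset.prod_congr rfl fun j _ => hcol j, Finset.prod_ite_mem,
      Finset.univ_inter, Finset.prod_const]
  -- total ENNReal sum
  have htotal : (∑' h : {h : Fin d → ℤ // h ≠ 0},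
      ENNReal.ofReal (rfun d α γ h.1 ^ (-1/lam)))
        = ∑ u ∈ S, ENNReal.ofReal (γ u ^ (1/lam)) * ENNReal.ofReal ZR ^ u.card := by
    have e0 : (∑' h : {h : Fin d → ℤ // h ≠ 0},
        ENNReal.ofReal (rfun d α γ h.1 ^ (-1/lam))) = ∑' h : Fin d → ℤ, F h := by
      refine (tsum_subtype {h : Fin d → ℤ | h ≠ 0}
        (fun h => ENNReal.ofReal (rfun d α γ h ^ (-1/lam)))).trans
        (tsum_congr fun h => ?_)
      by_cases h0 : h = 0
      · simp [hF_def, h0, Set.indicator]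
      · simp [hF_def, h0, Set.indicator]
    rw [e0, tsum_congr hpoint, Summable.tsum_finsetSum (fun u _ => ENNReal.summable)]
    refine Finset.sum_congr rfl fun u _ => ?_
    rw [ENNReal.tsum_mul_left, htsum_u u]
  have hfin : (∑' h : {h : Fin d → ℤ // h ≠ 0},
      ENNReal.ofReal (rfun d α γ h.1 ^ (-1/lam))) ≠ ⊤ := by
    rw [htotal]
    refine (ENNReal.sum_lt_top.mpr fun u _ => ?_).ne
    exact ENNReal.mul_lt_top ENNReal.ofReal_lt_top (ENNReal.pow_lt_top ENNReal.ofReal_lt_top)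
  -- summability
  have hsummable : Summable (fun h : {h : Fin d → ℤ // h ≠ 0} => rfun d α γ h.1 ^ (-1 / lam)) := by
    have := ENNReal.summable_toReal hfin
    refine this.congr fun h => ?_
    rw [ENNReal.toReal_ofReal (hpos h.1).le]
  refine ⟨hsummable, ?_⟩
  -- real value of mu
  have hmu : mu d α γ lam = ∑ u ∈ S, γ u ^ (1/lam) * ZR ^ u.card := by
    have h1 : mu d α γ lam = (∑' h : {h : Fin d → ℤ // h ≠ 0},
        ENNReal.ofReal (rfun d α γ h.1 ^ (-1/lam))).toReal := by
      rw [ENNReal.tsum_toReal_eq fun h => ENNReal.ofReal_ne_top]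
      rw [mu]
      refine tsum_congr fun h => ?_
      rw [ENNReal.toReal_ofReal (hpos h.1).le]
    rw [h1, htotal, ENNReal.toReal_sum (fun u _ =>
      (ENNReal.mul_lt_top ENNReal.ofReal_lt_top (ENNReal.pow_lt_top ENNReal.ofReal_lt_top)).ne)]
    refine Finset.sum_congr rfl fun u _ => ?_
    rw [ENNReal.toReal_mul, ENNReal.toReal_pow, ENNReal.toReal_ofReal (Real.rpow_nonneg (hγ u).le _),
      ENNReal.toReal_ofReal hZR0]
  -- cast to ℂ
  have hZC : ((ZR : ℝ) : ℂ) = 2 * riemannZeta ((s : ℝ) : ℂ) := by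
    rw [hZR_def, int_sum_eq s hs1, Complex.ofReal_mul, zeta_real s hs1]
    norm_num
  rw [hmu]
  push_cast
  refine Finset.sum_congr rfl fun u _ => ?_
  rw [← hZC]
end

section
/- Let d ∈ ℕ, let a : ℤ^d → ℂ be absolutely summable, and let f : ℝ^d → ℂ be given by f(x) = Σ_{h ∈ ℤ^d} a(h) · e^{2πi h·x}. Let p be a prime and z ∈ ℤ^d. Then ∫_{[0,1)^d} | Q_{d,p,z,Δ}(f) − a(0) |² dΔ = Σ_{h ∈ ℤ^d∖{0}, h·z ≡ 0 (mod p)} |a(h)|². -/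
open scoped BigOperators Classical ENNReal
open MeasureTheory

/-- The shifted rank-1 lattice rule `Q_{d,m,z,Δ}(f)`. -/
noncomputable def Q (d m : ℕ) (z : Fin d → ℤ) (Δ : Fin d → ℝ) (f : (Fin d → ℝ) → ℂ) : ℂ :=
  (m : ℂ)⁻¹ * ∑ k ∈ Finset.range m, f fun j => Int.fract (((z j * k : ℤ) : ℝ) / m + Δ j)

/-- The half-open unit box `[0,1)^d`. -/
def unitBox (d : ℕ) : Set (Fin d → ℝ) := Set.univ.pi fun _ => Set.Ico (0 : ℝ) 1

/-- The exponential function `e^{2πi h·x}`. -/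
noncomputable def Efun (d : ℕ) (h : Fin d → ℤ) (x : Fin d → ℝ) : ℂ :=
  Complex.exp (2 * (Real.pi : ℂ) * Complex.I * ∑ j, (h j : ℂ) * (x j : ℂ))

lemma Efun_sum_eq (d : ℕ) (h : Fin d → ℤ) (x : Fin d → ℝ) :
    Efun d h x = Complex.exp (2 * (Real.pi : ℂ) * Complex.I *
      ((∑ j, (h j : ℝ) * x j : ℝ) : ℂ)) := by
  unfold Efun; push_cast; ring_nf

lemma norm_Efun (d : ℕ) (h : Fin d → ℤ) (x : Fin d → ℝ) : ‖Efun d h x‖ = 1 := by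
  rw [Efun_sum_eq, Complex.norm_exp]
  simp [Complex.mul_re, Complex.mul_im]

lemma Efun_add (d : ℕ) (h : Fin d → ℤ) (x y : Fin d → ℝ) :
    Efun d h (fun j => x j + y j) = Efun d h x * Efun d h y := by
  unfold Efun
  rw [← Complex.exp_add]
  congr 1
  push_cast
  rw [← mul_add, ← Finset.sum_add_distrib]
  congr 1
  apply Finset.sum_congr rfl
  intro j _
  ring

lemma Efun_fract (d : ℕ) (h : Fin d → ℤ) (y : Fin d → ℝ) :
    Efun d h (fun j => Int.fract (y j)) = Efun d h y := by
  have key : ∀ j, Int.fract (y j) = y j + (-(⌊y j⌋) : ℤ) := by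
    intro j; rw [Int.fract]; push_cast; ring
  calc Efun d h (fun j => Int.fract (y j))
      = Efun d h (fun j => y j + ((-(⌊y j⌋) : ℤ) : ℝ)) := by
        congr 1; funext j; exact key j
    _ = Efun d h y * Efun d h (fun j => ((-(⌊y j⌋) : ℤ) : ℝ)) := Efun_add d h y _
    _ = Efun d h y := by
        rw [mul_comm]
        convert one_mul _

        unfold Efun
        have : (∑ j, (h j : ℂ) * (((-(⌊y j⌋) : ℤ) : ℝ) : ℂ)) = ((∑ j, h j * (-(⌊y j⌋)) : ℤ) : ℂ) := by
          push_cast; apply Finset.sum_congr rfl; intros; ring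
        rw [this]
        rw [show (2 * (Real.pi : ℂ) * Complex.I * ((∑ j, h j * (-(⌊y j⌋)) : ℤ) : ℂ)) =
          ((∑ j, h j * (-(⌊y j⌋)) : ℤ) : ℂ) * (2 * (Real.pi : ℂ) * Complex.I) by ring]
        exact Complex.exp_int_mul_two_pi_mul_I _

lemma char_sum (p : ℕ) (hp : p.Prime) (m : ℤ) :
    (p : ℂ)⁻¹ * ∑ k ∈ Finset.range p, Complex.exp
      (2 * (Real.pi : ℂ) * Complex.I * (m * k / p)) =
    if (p : ℤ) ∣ m then 1 else 0 := by
  have hp0 : (p : ℂ) ≠ 0 := by exact_mod_cast hp.ne_zero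
  set ω : ℂ := Complex.exp (2 * (Real.pi : ℂ) * Complex.I * (m / p)) with hω
  have hterm : ∀ k : ℕ, Complex.exp (2 * (Real.pi : ℂ) * Complex.I * (m * k / p)) = ω ^ k := by
    intro k
    rw [hω, ← Complex.exp_nat_mul]
    congr 1; ring
  rw [Finset.sum_congr rfl fun k _ => hterm k]
  by_cases hdvd : (p : ℤ) ∣ m
  · obtain ⟨t, ht⟩ := hdvd
    have hω1 : ω = 1 := by
      rw [hω, ht]
      push_cast
      rw [show 2 * (Real.pi : ℂ) * Complex.I * ((p : ℂ) * t / p) =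
        (t : ℂ) * (2 * Real.pi * Complex.I) by field_simp]
      exact Complex.exp_int_mul_two_pi_mul_I t
    rw [if_pos ⟨t, ht⟩]
    simp only [hω1, one_pow, Finset.sum_const, Finset.card_range, nsmul_eq_mul, mul_one]
    exact inv_mul_cancel₀ hp0
  · have hω1 : ω ≠ 1 := by
      intro hcon
      rw [hω, Complex.exp_eq_one_iff] at hcon
      obtain ⟨n, hn⟩ := hcon
      have h2 : (2 * (Real.pi : ℂ) * Complex.I) ≠ 0 := by
        simp [Real.pi_ne_zero, Complex.I_ne_zero, Complex.ofReal_ne_zero]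
      have h3 : (m : ℂ) / p = n :=
        mul_left_cancel₀ h2 (by rw [hn]; ring)
      rw [div_eq_iff hp0] at h3
      have : m = n * p := by exact_mod_cast h3
      exact hdvd ⟨n, by linarith⟩
    have hωp : ω ^ p = 1 := by
      rw [hω, ← Complex.exp_nat_mul]
      rw [show (p : ℂ) * (2 * (Real.pi : ℂ) * Complex.I * (m / p)) =
        (m : ℂ) * (2 * Real.pi * Complex.I) by field_simp]
      exact Complex.exp_int_mul_two_pi_mul_I m
    rw [geom_sum_eq hω1, hωp]
    simp [hdvd]

lemma measurableSet_unitBox (d : ℕ) : MeasurableSet (unitBox d) :=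
  MeasurableSet.univ_pi fun _ => measurableSet_Ico

lemma volume_unitBox (d : ℕ) : volume (unitBox d) = 1 := by
  rw [unitBox, volume_pi_pi]
  simp [Real.volume_Ico]

lemma one_dim_integral (m : ℤ) :
    (∫ t in Set.Ico (0:ℝ) 1, Complex.exp (2 * (Real.pi : ℂ) * Complex.I * m * t)) =
    if m = 0 then 1 else 0 := by
  rw [MeasureTheory.Measure.restrict_congr_set MeasureTheory.Ico_ae_eq_Ioc,
    ← intervalIntegral.integral_of_le zero_le_one]
  by_cases hm : m = 0
  · simp [hm]
  · rw [if_neg hm]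
    have hc : (2 * (Real.pi : ℂ) * Complex.I * m) ≠ 0 := by
      simp [Real.pi_ne_zero, Complex.I_ne_zero, Complex.ofReal_ne_zero, hm]
    have := integral_exp_mul_complex (a := (0:ℝ)) (b := 1) hc
    simp only [mul_comm] at this
    rw [show (fun t : ℝ => Complex.exp (2 * (Real.pi : ℂ) * Complex.I * m * t)) =
      (fun t : ℝ => Complex.exp ((2 * (Real.pi : ℂ) * Complex.I * m) * t)) from rfl]
    rw [integral_exp_mul_complex hc]
    have h1 : Complex.exp (2 * (Real.pi : ℂ) * Complex.I * m * (1:ℝ)) = 1 := by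
      rw [show (2 * (Real.pi : ℂ) * Complex.I * m * (1:ℝ)) =
        (m : ℂ) * (2 * Real.pi * Complex.I) by push_cast; ring]
      exact Complex.exp_int_mul_two_pi_mul_I m
    rw [h1]
    simp

lemma Efun_eq_prod (d : ℕ) (h : Fin d → ℤ) (x : Fin d → ℝ) :
    Efun d h x = ∏ j, Complex.exp (2 * (Real.pi : ℂ) * Complex.I * (h j) * (x j)) := by
  rw [Efun, ← Complex.exp_sum]
  congr 1
  rw [Finset.mul_sum]
  apply Finset.sum_congr rfl
  intros; ring

lemma box_integral (d : ℕ) (h : Fin d → ℤ) :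
    (∫ Δ in unitBox d, Efun d h Δ) = if h = 0 then 1 else 0 := by
  rw [← MeasureTheory.integral_indicator (measurableSet_unitBox d)]
  have key : (unitBox d).indicator (Efun d h) = fun Δ : Fin d → ℝ =>
      ∏ j, (Set.Ico (0:ℝ) 1).indicator
        (fun t => Complex.exp (2 * (Real.pi : ℂ) * Complex.I * (h j) * t)) (Δ j) := by
    funext Δ
    by_cases hΔ : Δ ∈ unitBox d
    · rw [Set.indicator_of_mem hΔ, Efun_eq_prod]
      apply Finset.prod_congr rfl
      intro j _
      rw [Set.indicator_of_mem (hΔ j (Set.mem_univ j))]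
    · rw [Set.indicator_of_notMem hΔ]
      rw [unitBox, Set.mem_pi] at hΔ
      push_neg at hΔ
      obtain ⟨j, _, hj⟩ := hΔ
      exact (Finset.prod_eq_zero (Finset.mem_univ j) (Set.indicator_of_notMem hj _)).symm
  rw [key, MeasureTheory.volume_pi, MeasureTheory.integral_fintype_prod_eq_prod
    (fun j t => (Set.Ico (0:ℝ) 1).indicator
        (fun u => Complex.exp (2 * (Real.pi : ℂ) * Complex.I * (h j) * u)) t)]
  have : ∀ j, (∫ t : ℝ, (Set.Ico (0:ℝ) 1).indicator
      (fun u => Complex.exp (2 * (Real.pi : ℂ) * Complex.I * (h j) * u)) t)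
      = if h j = 0 then 1 else 0 := by
    intro j
    rw [MeasureTheory.integral_indicator measurableSet_Ico]
    exact one_dim_integral (h j)
  rw [Finset.prod_congr rfl fun j _ => this j]
  by_cases h0 : h = 0
  · simp [h0]
  · rw [if_neg h0]
    obtain ⟨j, hj⟩ : ∃ j, h j ≠ 0 := by
      by_contra hcon; push_neg at hcon; exact h0 (funext hcon)
    exact Finset.prod_eq_zero (Finset.mem_univ j) (by simp [hj])

lemma Q_repr (d : ℕ) (a : (Fin d → ℤ) → ℂ) (ha : Summable fun h => ‖a h‖)
    (f : (Fin d → ℝ) → ℂ)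
    (hf : ∀ x, f x = ∑' h : Fin d → ℤ,
      a h * Complex.exp (2 * (Real.pi : ℂ) * Complex.I * ∑ j, (h j : ℂ) * (x j : ℂ)))
    (p : ℕ) (hp : p.Prime) (z : Fin d → ℤ) (Δ : Fin d → ℝ) :
    Q d p z Δ f - a 0 = ∑' h : Fin d → ℤ,
      (if h ≠ 0 ∧ (p : ℤ) ∣ ∑ j, h j * z j then a h else 0) * Efun d h Δ := by
  set v : (Fin d → ℤ) → ℂ := fun h =>
    a h * Efun d h Δ * (if (p : ℤ) ∣ ∑ j, h j * z j then 1 else 0) with hv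
  have hvsumm : Summable v := by
    apply Summable.of_norm
    apply Summable.of_nonneg_of_le (fun h => norm_nonneg _) _ ha
    intro h
    rw [hv]
    simp only [norm_mul, norm_Efun, mul_one]
    by_cases hd : (p : ℤ) ∣ ∑ j, h j * z j <;> simp [hd]
  have hQ : Q d p z Δ f = ∑' h, v h := by
    rw [Q]
    have hstep : ∀ k : ℕ,
        (f fun j => Int.fract (((z j * k : ℤ) : ℝ) / p + Δ j)) =
        ∑' h : Fin d → ℤ, a h * Efun d h Δ *
          Complex.exp (2 * (Real.pi : ℂ) * Complex.I * ((∑ j, h j * z j : ℤ) * k / p)) := by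
      intro k
      rw [hf]
      apply tsum_congr
      intro h
      have h1 : (fun j => Int.fract (((z j * k : ℤ) : ℝ) / p + Δ j)) =
          fun j => Int.fract ((fun j => ((z j * k : ℤ) : ℝ) / p + Δ j) j) := rfl
      have h2 : a h * Complex.exp (2 * (Real.pi : ℂ) * Complex.I *
          ∑ j, (h j : ℂ) * ((Int.fract (((z j * k : ℤ) : ℝ) / p + Δ j) : ℝ) : ℂ)) =
          a h * Efun d h (fun j => Int.fract (((z j * k : ℤ) : ℝ) / p + Δ j)) := rfl
      rw [h2, h1, Efun_fract d h _]
      have h3 : Efun d h (fun j => ((z j * k : ℤ) : ℝ) / p + Δ j) =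
          Efun d h (fun j => ((z j * k : ℤ) : ℝ) / p) * Efun d h Δ := Efun_add d h _ _
      rw [h3]
      have h4 : Efun d h (fun j => ((z j * k : ℤ) : ℝ) / p) =
          Complex.exp (2 * (Real.pi : ℂ) * Complex.I * ((∑ j, h j * z j : ℤ) * k / p)) := by
        rw [Efun]
        congr 1
        push_cast
        simp only [Finset.mul_sum, Finset.sum_mul, Finset.sum_div]
        exact Finset.sum_congr rfl (fun j _ => by ring)
      rw [h4]; ring
    rw [Finset.sum_congr rfl fun k _ => hstep k]
    have hsummk : ∀ k ∈ Finset.range p, Summable (fun h : Fin d → ℤ =>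
        a h * Efun d h Δ *
          Complex.exp (2 * (Real.pi : ℂ) * Complex.I * ((∑ j, h j * z j : ℤ) * k / p))) := by
      intro k _
      apply Summable.of_norm
      apply Summable.of_nonneg_of_le (fun h => norm_nonneg _) _ ha
      intro h
      have hn : ‖Complex.exp (2 * (Real.pi : ℂ) * Complex.I *
          ((∑ j, h j * z j : ℤ) * k / p))‖ = 1 := by
        rw [Complex.norm_exp]
        have : (2 * (Real.pi : ℂ) * Complex.I * ((∑ j, h j * z j : ℤ) * k / p)).re = 0 := by
          have h5 : ((∑ j, h j * z j : ℤ) * (k : ℂ) / p) =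
              ((((∑ j, h j * z j : ℤ) : ℝ) * k / p : ℝ) : ℂ) := by push_cast; ring
          rw [h5]
          simp [Complex.mul_re, Complex.mul_im]
        rw [this, Real.exp_zero]
      rw [norm_mul, norm_mul, norm_Efun, hn, mul_one, mul_one]
    rw [← Summable.tsum_finsetSum hsummk, ← tsum_mul_left]
    apply tsum_congr
    intro h
    rw [← Finset.mul_sum, hv]
    simp only []
    rw [show ((p:ℂ)⁻¹ * (a h * Efun d h Δ * ∑ k ∈ Finset.range p,
        Complex.exp (2 * (Real.pi : ℂ) * Complex.I * ((∑ j, h j * z j : ℤ) * k / p)))) =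
      a h * Efun d h Δ * ((p:ℂ)⁻¹ * ∑ k ∈ Finset.range p,
        Complex.exp (2 * (Real.pi : ℂ) * Complex.I * ((∑ j, h j * z j : ℤ) * k / p))) by ring]
    rw [char_sum p hp _]
  rw [hQ, hvsumm.tsum_eq_add_tsum_ite 0]
  have hv0 : v 0 = a 0 := by
    rw [hv]
    simp only [Pi.zero_apply, Int.cast_zero, zero_mul, Finset.sum_const_zero, dvd_zero, if_true,
      mul_one]
    have : Efun d 0 Δ = 1 := by
      rw [Efun]; simp
    rw [this, mul_one]
  rw [hv0]
  rw [add_sub_cancel_left]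
  apply tsum_congr
  intro h
  by_cases h0 : h = 0
  · simp [h0, hv]
  · rw [if_neg h0]
    simp only [hv]
    by_cases hd : (p : ℤ) ∣ ∑ j, h j * z j
    · rw [if_pos hd, if_pos ⟨h0, hd⟩, mul_one]
    · rw [if_neg hd, if_neg (fun hc : _ ∧ _ => hd hc.2), mul_zero, zero_mul]

lemma continuous_Efun (d : ℕ) (h : Fin d → ℤ) : Continuous (Efun d h) := by
  unfold Efun
  exact Complex.continuous_exp.comp (continuous_const.mul (continuous_finset_sum _
    fun j _ => continuous_const.mul (Complex.continuous_ofReal.comp (continuous_apply j))))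

lemma Efun_mul_conj (d : ℕ) (h h' : Fin d → ℤ) (x : Fin d → ℝ) :
    Efun d h x * (starRingEnd ℂ) (Efun d h' x) = Efun d (h - h') x := by
  unfold Efun
  rw [← Complex.exp_conj, ← Complex.exp_add]
  congr 1
  have hc : (starRingEnd ℂ) (2 * (Real.pi : ℂ) * Complex.I * ∑ j, (h' j : ℂ) * (x j : ℂ))
      = -(2 * (Real.pi : ℂ) * Complex.I * ∑ j, (h' j : ℂ) * (x j : ℂ)) := by
    rw [map_mul, map_mul, map_mul, Complex.conj_I, map_ofNat, Complex.conj_ofReal, map_sum]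
    rw [Finset.sum_congr rfl (fun j _ => by rw [map_mul, Complex.conj_ofReal, map_intCast])]
    ring
  rw [hc, ← sub_eq_add_neg, ← mul_sub, ← Finset.sum_sub_distrib]
  congr 1
  apply Finset.sum_congr rfl
  intro j _
  rw [Pi.sub_apply, Int.cast_sub]
  ring

lemma parseval (d : ℕ) (b : (Fin d → ℤ) → ℂ) (hb : Summable fun h => ‖b h‖) :
    (∫ Δ in unitBox d, ‖∑' h : Fin d → ℤ, b h * Efun d h Δ‖ ^ 2) =
      ∑' h : Fin d → ℤ, ‖b h‖ ^ 2 := by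
  classical
  set μ := (volume : Measure (Fin d → ℝ)).restrict (unitBox d) with hμ
  haveI : IsFiniteMeasure μ := by
    constructor
    rw [hμ, Measure.restrict_apply_univ, volume_unitBox]
    exact ENNReal.one_lt_top
  set F : ((Fin d → ℤ) × (Fin d → ℤ)) → (Fin d → ℝ) → ℂ := fun q Δ =>
    (b q.1 * Efun d q.1 Δ) * (starRingEnd ℂ) (b q.2 * Efun d q.2 Δ) with hF
  have hnormterm : ∀ (h : Fin d → ℤ) (Δ : Fin d → ℝ), ‖b h * Efun d h Δ‖ = ‖b h‖ := by
    intro h Δ; rw [norm_mul, norm_Efun, mul_one]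
  have hsn : ∀ Δ : Fin d → ℝ, Summable (fun h : Fin d → ℤ => ‖b h * Efun d h Δ‖) := by
    intro Δ
    simpa only [hnormterm] using hb
  have hsn' : ∀ Δ : Fin d → ℝ, Summable
      (fun h : Fin d → ℤ => ‖(starRingEnd ℂ) (b h * Efun d h Δ)‖) := by
    intro Δ
    simpa only [RCLike.norm_conj] using hsn Δ
  have hFnorm : ∀ q Δ, ‖F q Δ‖ = ‖b q.1‖ * ‖b q.2‖ := by
    intro q Δ
    rw [hF]
    simp only []
    rw [norm_mul, hnormterm, RCLike.norm_conj, hnormterm]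
  have hpoint : ∀ Δ : Fin d → ℝ, ‖∑' h : Fin d → ℤ, b h * Efun d h Δ‖ ^ 2 =
      ∑' q : (Fin d → ℤ) × (Fin d → ℤ), (F q Δ).re := by
    intro Δ
    set S := ∑' h : Fin d → ℤ, b h * Efun d h Δ with hS
    have habs : ‖S‖ ^ 2 = (S * (starRingEnd ℂ) S).re := by
      rw [Complex.mul_conj, Complex.ofReal_re]
      exact Complex.sq_norm S
    rw [habs]
    have hconj : (starRingEnd ℂ) S = ∑' h : Fin d → ℤ, (starRingEnd ℂ) (b h * Efun d h Δ) := by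
      rw [hS]
      exact tsum_star
    rw [hconj, tsum_mul_tsum_of_summable_norm (hsn Δ) (hsn' Δ)]
    rw [Complex.re_tsum (summable_mul_of_summable_norm (hsn Δ) (hsn' Δ))]
  rw [MeasureTheory.setIntegral_congr_fun (measurableSet_unitBox d)
    (fun Δ _ => hpoint Δ)]
  have hmeas : ∀ q : (Fin d → ℤ) × (Fin d → ℤ),
      AEStronglyMeasurable (fun Δ => (F q Δ).re) μ := by
    intro q
    apply Continuous.aestronglyMeasurable
    apply Complex.continuous_re.comp
    exact ((continuous_const.mul (continuous_Efun d q.1)).mul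
      (Complex.continuous_conj.comp (continuous_const.mul (continuous_Efun d q.2))))
  have hbnn : Summable (fun h : Fin d → ℤ => ‖b h‖₊) := by
    rw [← NNReal.summable_coe]
    simpa [coe_nnnorm] using hb
  have hrtop : (∑' h : Fin d → ℤ, (‖b h‖₊ : ℝ≥0∞)) ≠ ⊤ := by
    rw [← ENNReal.coe_tsum hbnn]
    exact ENNReal.coe_ne_top
  have hlintbound : ∀ q : (Fin d → ℤ) × (Fin d → ℤ),
      (∫⁻ Δ, ‖(F q Δ).re‖₊ ∂μ) ≤ (‖b q.1‖₊ : ℝ≥0∞) * (‖b q.2‖₊ : ℝ≥0∞) := by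
    intro q
    have hbound : ∀ Δ, (‖(F q Δ).re‖₊ : ℝ≥0∞) ≤ (‖b q.1‖₊ : ℝ≥0∞) * (‖b q.2‖₊ : ℝ≥0∞) := by
      intro Δ
      have h1 : ‖(F q Δ).re‖ ≤ ‖F q Δ‖ := Complex.abs_re_le_norm _
      have h2 : ‖(F q Δ).re‖₊ ≤ ‖F q Δ‖₊ := h1
      have h3 : ‖F q Δ‖₊ = ‖b q.1‖₊ * ‖b q.2‖₊ := by
        ext; push_cast; exact hFnorm q Δ
      rw [← ENNReal.coe_mul, ← h3]
      exact_mod_cast h2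
    calc (∫⁻ Δ, ‖(F q Δ).re‖₊ ∂μ) ≤ ∫⁻ _, (‖b q.1‖₊ : ℝ≥0∞) * (‖b q.2‖₊ : ℝ≥0∞) ∂μ :=
          lintegral_mono hbound
      _ = (‖b q.1‖₊ : ℝ≥0∞) * (‖b q.2‖₊ : ℝ≥0∞) * μ Set.univ := by
          rw [MeasureTheory.lintegral_const]
      _ ≤ (‖b q.1‖₊ : ℝ≥0∞) * (‖b q.2‖₊ : ℝ≥0∞) := by
          rw [hμ, Measure.restrict_apply_univ, volume_unitBox, mul_one]
  have hlint : (∑' q : (Fin d → ℤ) × (Fin d → ℤ), ∫⁻ Δ, ‖(F q Δ).re‖₊ ∂μ) ≠ ⊤ := by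
    apply ne_top_of_le_ne_top _ (ENNReal.tsum_le_tsum hlintbound)
    have hprod := ENNReal.tsum_prod (f := fun x y : Fin d → ℤ => (‖b x‖₊ : ℝ≥0∞) * (‖b y‖₊ : ℝ≥0∞))
    rw [hprod]
    simp_rw [ENNReal.tsum_mul_left, ENNReal.tsum_mul_right]
    exact ENNReal.mul_ne_top hrtop hrtop
  rw [MeasureTheory.integral_tsum hmeas hlint]
  have hFint : ∀ q : (Fin d → ℤ) × (Fin d → ℤ), Integrable (F q) μ := by
    intro q
    constructor
    · apply Continuous.aestronglyMeasurable
      exact ((continuous_const.mul (continuous_Efun d q.1)).mul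
        (Complex.continuous_conj.comp (continuous_const.mul (continuous_Efun d q.2))))
    · apply HasFiniteIntegral.of_bounded (C := ‖b q.1‖ * ‖b q.2‖)
      filter_upwards with Δ
      rw [hFnorm q Δ]
  have hint : ∀ q : (Fin d → ℤ) × (Fin d → ℤ),
      (∫ Δ, (F q Δ).re ∂μ) = if q.1 = q.2 then ‖b q.1‖ ^ 2 else 0 := by
    intro q
    have hre := integral_re (𝕜 := ℂ) (hFint q)
    simp only [RCLike.re_eq_complex_re] at hre
    rw [hre]
    have hFq : F q = fun Δ => (b q.1 * (starRingEnd ℂ) (b q.2)) * Efun d (q.1 - q.2) Δ := by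
      funext Δ
      rw [hF]
      simp only [map_mul]
      rw [← Efun_mul_conj d q.1 q.2 Δ]
      ring
    rw [hFq, MeasureTheory.integral_const_mul, box_integral d (q.1 - q.2)]
    by_cases hq : q.1 = q.2
    · rw [if_pos (sub_eq_zero.mpr hq), if_pos hq, mul_one, hq, Complex.mul_conj,
        Complex.ofReal_re]
      exact (Complex.sq_norm _).symm
    · rw [if_neg (fun hc => hq (sub_eq_zero.mp hc)), if_neg hq, mul_zero]
      simp
  rw [tsum_congr hint]
  have hC : ∀ h : Fin d → ℤ, ‖b h‖ ≤ ∑' h', ‖b h'‖ :=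
    fun h => hb.le_tsum h fun _ _ => norm_nonneg _
  have hg : Summable (fun h : Fin d → ℤ => ‖b h‖ ^ 2) := by
    refine Summable.of_nonneg_of_le (fun h => sq_nonneg _) (fun h => ?_)
      (hb.mul_left (∑' h', ‖b h'‖))
    rw [sq]
    exact mul_le_mul_of_nonneg_right (hC h) (norm_nonneg _)
  have hdiag : HasSum (fun q : (Fin d → ℤ) × (Fin d → ℤ) =>
      if q.1 = q.2 then ‖b q.1‖ ^ 2 else 0) (∑' h, ‖b h‖ ^ 2) := by
    have hinj : Function.Injective (fun h : Fin d → ℤ => (h, h)) := by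
      intro x y hxy
      exact congrArg Prod.fst hxy
    rw [← Function.Injective.hasSum_iff hinj]
    · convert hg.hasSum using 1
      funext h
      simp
    · rintro ⟨x, y⟩ hxy
      by_cases hxy2 : x = y
      · exact absurd ⟨x, by rw [hxy2]⟩ hxy
      · simp [hxy2]
  exact hdiag.tsum_eq

theorem stmt5 (d : ℕ) (a : (Fin d → ℤ) → ℂ) (ha : Summable fun h => ‖a h‖)
    (f : (Fin d → ℝ) → ℂ)
    (hf : ∀ x, f x = ∑' h : Fin d → ℤ,
      a h * Complex.exp (2 * (Real.pi : ℂ) * Complex.I * ∑ j, (h j : ℂ) * (x j : ℂ)))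
    (p : ℕ) (hp : p.Prime) (z : Fin d → ℤ) :
    (∫ Δ in unitBox d, ‖Q d p z Δ f - a 0‖ ^ 2) =
      ∑' h : {h : Fin d → ℤ // h ≠ 0 ∧ (p : ℤ) ∣ ∑ j, h j * z j},
        ‖a h.1‖ ^ 2 := by
  classical
  set c : (Fin d → ℤ) → ℂ :=
    fun h => if h ≠ 0 ∧ (p : ℤ) ∣ ∑ j, h j * z j then a h else 0 with hc
  have hcs : Summable (fun h => ‖c h‖) := by
    apply Summable.of_nonneg_of_le (fun h => norm_nonneg _) _ ha
    intro h
    rw [hc]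
    by_cases hcond : h ≠ 0 ∧ (p : ℤ) ∣ ∑ j, h j * z j <;> simp [hcond]
  have hrw : (∫ Δ in unitBox d, ‖Q d p z Δ f - a 0‖ ^ 2) =
      ∫ Δ in unitBox d, ‖∑' h : Fin d → ℤ, c h * Efun d h Δ‖ ^ 2 := by
    apply MeasureTheory.setIntegral_congr_fun (measurableSet_unitBox d)
    intro Δ _
    exact congrArg (fun t => ‖t‖ ^ 2) (Q_repr d a ha f hf p hp z Δ)
  rw [hrw, parseval d c hcs]
  have htyp := tsum_subtype {h : Fin d → ℤ | h ≠ 0 ∧ (p : ℤ) ∣ ∑ j, h j * z j}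
    (fun h => ‖a h‖ ^ 2)
  refine Eq.trans ?_ htyp.symm
  apply tsum_congr
  intro h
  by_cases hcond : h ≠ 0 ∧ (p : ℤ) ∣ ∑ j, h j * z j
  · rw [Set.indicator_of_mem
      (show h ∈ {h : Fin d → ℤ | h ≠ 0 ∧ (p : ℤ) ∣ ∑ j, h j * z j} from hcond)]
    simp [hc, hcond]
  · rw [Set.indicator_of_notMem
      (show h ∉ {h : Fin d → ℤ | h ≠ 0 ∧ (p : ℤ) ∣ ∑ j, h j * z j} from hcond)]
    simp [hc, hcond]
end

section
/- Let d ∈ ℕ, α > 0, let γ_u > 0 for each subset u ⊆ {1,…,d}, let n ≥ 2 be a natural number, let z ∈ ℤ^d, and let h* ∈ ℤ^d∖{0}. Define ξ : ℝ^d → ℂ by ξ(x) = e^{2πi h*·x} / r_{α,γ}(h*). Then ∫_{[0,1)^d} ξ(x) dx = 0 and (1/|P_n|) · Σ_{p ∈ P_n} ∫_{[0,1)^d} | Q_{d,p,z,Δ}(ξ) |² dΔ = ω_z(h*) · r_{α,γ}(h*)^{−2}. -/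
open scoped BigOperators Classical ENNReal
open MeasureTheory

/-- `P_n = { p prime : n/2 < p ≤ n }`. -/
def Pset (n : ℕ) : Finset ℕ := (Finset.range (n + 1)).filter fun p => p.Prime ∧ n < 2 * p

/-- `ω_z(h) = (1/|P_n|) Σ_{p ∈ P_n} 𝟙(h·z ≡ 0 mod p)`. -/
noncomputable def omegaZ (d n : ℕ) (z : Fin d → ℤ) (h : Fin d → ℤ) : ℝ :=
  (1 / ((Pset n).card : ℝ)) * ∑ p ∈ Pset n, if (p : ℤ) ∣ ∑ j, h j * z j then 1 else 0

/- ### Auxiliary lemmas -/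

lemma aux_single_int (m : ℤ) (hm : m ≠ 0) :
    ∫ x in Set.Ico (0:ℝ) 1, Complex.exp (2 * (Real.pi:ℂ) * Complex.I * ((m:ℂ) * x)) = 0 := by
  have hc : (2 * (Real.pi:ℂ) * Complex.I * m) ≠ 0 := by
    simp [Real.pi_ne_zero, Complex.I_ne_zero, hm]
  have : ∀ x : ℝ, Complex.exp (2 * (Real.pi:ℂ) * Complex.I * ((m:ℂ) * x))
      = Complex.exp ((2 * (Real.pi:ℂ) * Complex.I * m) * x) := by
    intro x; ring_nf
  simp_rw [this]
  rw [MeasureTheory.integral_Ico_eq_integral_Ioo, ← MeasureTheory.integral_Ioc_eq_integral_Ioo,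
    ← intervalIntegral.integral_of_le (by norm_num : (0:ℝ) ≤ 1),
    integral_exp_mul_complex hc]
  have h1 : Complex.exp (2 * (Real.pi:ℂ) * Complex.I * m) = 1 := by
    rw [show (2 * (Real.pi:ℂ) * Complex.I * m) = m * (2 * Real.pi * Complex.I) by ring]
    exact Complex.exp_int_mul_two_pi_mul_I m
  simp [h1]

lemma aux_box_int (d : ℕ) (g : Fin d → ℝ → ℂ) :
    ∫ x in unitBox d, ∏ j, g j (x j) = ∏ j, ∫ t in Set.Ico (0:ℝ) 1, g j t := by
  rw [← MeasureTheory.integral_indicator (show MeasurableSet (unitBox d) from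
    MeasurableSet.univ_pi fun _ => measurableSet_Ico)]
  have key : ∀ x : Fin d → ℝ, (unitBox d).indicator (fun x => ∏ j, g j (x j)) x
      = ∏ j, (Set.Ico (0:ℝ) 1).indicator (g j) (x j) := by
    intro x
    by_cases hx : x ∈ unitBox d
    · rw [Set.indicator_of_mem hx]
      exact Finset.prod_congr rfl fun j _ =>
        (Set.indicator_of_mem (hx j (Set.mem_univ j)) _).symm
    · rw [Set.indicator_of_notMem hx]
      have : ∃ j, x j ∉ Set.Ico (0:ℝ) 1 := by
        by_contra hcon
        push_neg at hcon
        exact hx fun j _ => hcon j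
      obtain ⟨j, hj⟩ := this
      exact (Finset.prod_eq_zero (Finset.mem_univ j) (Set.indicator_of_notMem hj _)).symm
  simp_rw [key]
  rw [MeasureTheory.integral_fintype_prod_volume_eq_prod]
  exact Finset.prod_congr rfl fun j _ =>
    MeasureTheory.integral_indicator measurableSet_Ico

lemma aux_exp_sum_fract (d : ℕ) (h : Fin d → ℤ) (c : Fin d → ℝ) :
    Complex.exp (2 * (Real.pi:ℂ) * Complex.I * ∑ j, (h j : ℂ) * ((Int.fract (c j) : ℝ) : ℂ))
      = Complex.exp (2 * (Real.pi:ℂ) * Complex.I * ∑ j, (h j : ℂ) * ((c j : ℝ) : ℂ)) := by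
  have hA : (∑ j, (h j : ℂ) * ((Int.fract (c j) : ℝ) : ℂ))
      = (∑ j, (h j : ℂ) * ((c j : ℝ) : ℂ)) - ∑ j, (h j : ℂ) * ((⌊c j⌋ : ℤ) : ℂ) := by
    rw [← Finset.sum_sub_distrib]
    refine Finset.sum_congr rfl fun j _ => ?_
    rw [Int.fract]
    push_cast
    ring
  have hN : (∑ j, (h j : ℂ) * ((⌊c j⌋ : ℤ) : ℂ)) = ((∑ j, h j * ⌊c j⌋ : ℤ) : ℂ) := by
    push_cast; ring
  rw [hA, hN]
  rw [show 2 * (Real.pi:ℂ) * Complex.I *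
        ((∑ j, (h j : ℂ) * ((c j : ℝ) : ℂ)) - ((∑ j, h j * ⌊c j⌋ : ℤ) : ℂ))
      = 2 * (Real.pi:ℂ) * Complex.I * (∑ j, (h j : ℂ) * ((c j : ℝ) : ℂ))
        + ((-∑ j, h j * ⌊c j⌋ : ℤ) : ℂ) * (2 * Real.pi * Complex.I) by push_cast; ring]
  rw [Complex.exp_add, Complex.exp_int_mul_two_pi_mul_I, mul_one]

lemma aux_Q_abs_sq (d m : ℕ) (hm : 0 < m) (z h : Fin d → ℤ) (r : ℝ) (hr : 0 < r)
    (ξ : (Fin d → ℝ) → ℂ)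
    (hξ : ∀ x, ξ x =
      Complex.exp (2 * (Real.pi : ℂ) * Complex.I * ∑ j, (h j : ℂ) * (x j : ℂ)) / (r : ℂ))
    (Δ : Fin d → ℝ) :
    ‖Q d m z Δ ξ‖ ^ 2
      = (if (m:ℤ) ∣ ∑ j, h j * z j then 1 else 0) * (r ^ 2)⁻¹ := by
  have hm0 : (m:ℂ) ≠ 0 := Nat.cast_ne_zero.mpr hm.ne'
  set S : ℤ := ∑ j, h j * z j with hS
  set D : ℝ := ∑ j, (h j : ℝ) * Δ j with hD
  set ζ : ℂ := Complex.exp (2 * (Real.pi:ℂ) * Complex.I * ((S:ℂ) / m)) with hζ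
  have hzm : ζ ^ m = 1 := by
    rw [hζ, ← Complex.exp_nat_mul]
    rw [show (m:ℂ) * (2 * (Real.pi:ℂ) * Complex.I * ((S:ℂ) / m)) =
        (S:ℂ) * (2 * Real.pi * Complex.I) by field_simp]
    exact Complex.exp_int_mul_two_pi_mul_I S
  have hterm : ∀ k ∈ Finset.range m,
      ξ (fun j => Int.fract (((z j * k : ℤ) : ℝ) / m + Δ j))
        = ζ ^ k * (Complex.exp (2 * (Real.pi:ℂ) * Complex.I * ((D:ℝ) : ℂ)) / (r : ℂ)) := by
    intro k hk
    rw [hξ]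
    rw [aux_exp_sum_fract d h (fun j => ((z j * k : ℤ) : ℝ) / m + Δ j)]
    have harg : (∑ j, (h j : ℂ) * ((((z j * k : ℤ) : ℝ) / m + Δ j : ℝ) : ℂ))
        = (S:ℂ) / m * k + (D : ℂ) := by
      rw [hS, hD]
      push_cast
      have hsplit : ∀ j : Fin d, (h j:ℂ) * ((z j:ℂ) * (k:ℂ) / m + (Δ j:ℂ))
          = (h j:ℂ) * (z j:ℂ) * ((k:ℂ) / m) + (h j:ℂ) * (Δ j:ℂ) := fun j => by ring
      simp_rw [hsplit, Finset.sum_add_distrib, ← Finset.sum_mul]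
      ring
    rw [harg]
    rw [show 2 * (Real.pi:ℂ) * Complex.I * ((S:ℂ) / m * k + (D:ℂ))
        = (k:ℕ) * (2 * (Real.pi:ℂ) * Complex.I * ((S:ℂ) / m))
          + 2 * (Real.pi:ℂ) * Complex.I * ((D:ℝ):ℂ) by push_cast; ring]
    rw [Complex.exp_add, Complex.exp_nat_mul, ← hζ]
    ring
  have hQ : Q d m z Δ ξ = ((m : ℂ)⁻¹ * ∑ k ∈ Finset.range m, ζ ^ k) *
      (Complex.exp (2 * (Real.pi:ℂ) * Complex.I * ((D:ℝ) : ℂ)) / (r : ℂ)) := by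
    rw [Q, Finset.sum_congr rfl hterm, ← Finset.sum_mul]
    ring
  rw [hQ]
  have habsD : ‖Complex.exp (2 * (Real.pi:ℂ) * Complex.I * ((D:ℝ) : ℂ))‖ = 1 := by
    rw [show 2 * (Real.pi:ℂ) * Complex.I * ((D:ℝ):ℂ) = ((2 * Real.pi * D : ℝ) : ℂ) * Complex.I by
      push_cast; ring]
    exact Complex.norm_exp_ofReal_mul_I _
  by_cases hdvd : (m:ℤ) ∣ S
  · obtain ⟨t, ht⟩ := hdvd
    have hζ1 : ζ = 1 := by
      rw [hζ, ht]
      rw [show 2 * (Real.pi:ℂ) * Complex.I * (((m * t : ℤ):ℂ) / m)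
          = (t : ℤ) * (2 * Real.pi * Complex.I) by push_cast; field_simp]
      exact Complex.exp_int_mul_two_pi_mul_I t
    rw [hζ1]
    simp only [one_pow, Finset.sum_const, Finset.card_range, nsmul_eq_mul, mul_one,
      inv_mul_cancel₀ hm0, one_mul]
    rw [if_pos ⟨t, ht⟩, norm_div, habsD, Complex.norm_real, Real.norm_eq_abs, abs_of_pos hr]
    rw [div_pow, one_pow, one_mul]
    rw [one_div]
  · have hζne : ζ ≠ 1 := by
      intro h1
      rw [hζ, Complex.exp_eq_one_iff] at h1
      obtain ⟨k, hk⟩ := h1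
      have hpi : (Real.pi : ℂ) ≠ 0 := Complex.ofReal_ne_zero.mpr Real.pi_ne_zero
      have h2 : (2 * (Real.pi:ℂ) * Complex.I) ≠ 0 := by
        simp [hpi, Complex.I_ne_zero]
      have h3 : (S:ℂ) / m = k := mul_left_cancel₀ h2 (by linear_combination hk)
      have h4 : (S:ℂ) = k * m := (div_eq_iff hm0).mp h3
      have h5 : S = k * (m : ℤ) := by exact_mod_cast h4
      exact hdvd ⟨k, h5.trans (mul_comm _ _)⟩
    have hsum : (∑ k ∈ Finset.range m, ζ ^ k) = 0 := by
      rw [geom_sum_eq hζne, hzm]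
      simp
    rw [hsum, if_neg hdvd]
    simp

/- ### Main theorem -/

theorem stmt8 (d : ℕ) (α : ℝ) (hα : 0 < α) (γ : Finset (Fin d) → ℝ)
    (hγ : ∀ u, 0 < γ u) (n : ℕ) (hn : 2 ≤ n) (z : Fin d → ℤ)
    (hstar : Fin d → ℤ) (hne : hstar ≠ 0) (ξ : (Fin d → ℝ) → ℂ)
    (hξ : ∀ x, ξ x =
      Complex.exp (2 * (Real.pi : ℂ) * Complex.I * ∑ j, (hstar j : ℂ) * (x j : ℂ)) /
        (rfun d α γ hstar : ℂ)) :
    (∫ x in unitBox d, ξ x) = 0 ∧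
    (1 / ((Pset n).card : ℝ)) *
        ∑ p ∈ Pset n, ∫ Δ in unitBox d, ‖Q d p z Δ ξ‖ ^ 2
      = omegaZ d n z hstar * rfun d α γ hstar ^ (-2 : ℝ) := by
  have hr : 0 < rfun d α γ hstar := by
    rw [rfun]
    refine mul_pos (inv_pos.mpr (hγ _)) (Finset.prod_pos fun j hj => ?_)
    have hj0 := (Finset.mem_filter.mp hj).2
    exact Real.rpow_pos_of_pos (abs_pos.mpr (Int.cast_ne_zero.mpr hj0)) α
  constructor
  · -- first part
    simp_rw [hξ]
    rw [integral_div]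
    have hexp : ∀ x : Fin d → ℝ,
        Complex.exp (2 * (Real.pi : ℂ) * Complex.I * ∑ j, (hstar j : ℂ) * (x j : ℂ))
          = ∏ j, Complex.exp (2 * (Real.pi:ℂ) * Complex.I * ((hstar j : ℂ) * (x j : ℂ))) := by
      intro x
      rw [Finset.mul_sum, Complex.exp_sum]
    simp_rw [hexp]
    rw [aux_box_int d (fun j t => Complex.exp (2 * (Real.pi:ℂ) * Complex.I * ((hstar j : ℂ) * (t : ℂ))))]
    obtain ⟨j0, hj0⟩ := Function.ne_iff.mp hne
    rw [Finset.prod_eq_zero (Finset.mem_univ j0) (aux_single_int (hstar j0) hj0)]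
    simp
  · -- second part
    have hvol : (volume (unitBox d)).toReal = 1 := by
      rw [show unitBox d = Set.univ.pi fun _ : Fin d => Set.Ico (0:ℝ) 1 from rfl,
        volume_pi_pi]
      simp [Real.volume_Ico]
    have hint : ∀ p ∈ Pset n, (∫ Δ in unitBox d, ‖Q d p z Δ ξ‖ ^ 2)
        = (if (p:ℤ) ∣ ∑ j, hstar j * z j then 1 else 0) * ((rfun d α γ hstar) ^ 2)⁻¹ := by
      intro p hp
      have hpp : 0 < p := ((Finset.mem_filter.mp hp).2.1).pos
      simp_rw [aux_Q_abs_sq d p hpp z hstar _ hr ξ hξ]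
      rw [setIntegral_const, measureReal_def, hvol, one_smul]
    rw [Finset.sum_congr rfl hint, ← Finset.sum_mul]
    rw [omegaZ]
    rw [show rfun d α γ hstar ^ (-2 : ℝ) = ((rfun d α γ hstar) ^ 2)⁻¹ by
      rw [show (-2 : ℝ) = ((-2 : ℤ) : ℝ) by norm_num, Real.rpow_intCast, zpow_neg,
        show ((2:ℤ)) = ((2:ℕ):ℤ) by norm_num, zpow_natCast]]
    ring
end

section
/- Let d ∈ ℕ, α ≥ 0, let γ_u > 0 for each subset u ⊆ {1,…,d}, let n ≥ 2 be a natural number, and let C₂ > 0 be a constant such that |P_n| ≤ C₂·n/ln(n). Let z ∈ ℤ^d be arbitrary and let f_n(x) = Σ_{q ∈ P_n} ( r_{α,γ}(q·e₁) · √|P_n| )^{−1} · e^{2πi q x₁} with e₁ = (1,0,…,0) ∈ ℤ^d. Then (1/|P_n|) · Σ_{p ∈ P_n} | Q_{d,p,z}(f_n) | ≥ γ_{{1}} · √(ln(n)) / ( √C₂ · n^{α+1/2} ), where Q_{d,p,z}(f) = (1/p)·Σ_{k=0}^{p−1} f( (z·k mod p)/p ). -/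
open scoped BigOperators Classical ENNReal
open MeasureTheory

lemma exp_int' (m : ℤ) : Complex.exp (2*Real.pi*Complex.I*m) = 1 := by
  rw [show (2*(Real.pi:ℂ)*Complex.I*m) = m * (2*Real.pi*Complex.I) by ring,
    Complex.exp_int_mul_two_pi_mul_I]

lemma exp_fract' (q : ℕ) (r : ℝ) :
    Complex.exp (2*Real.pi*Complex.I*q*(Int.fract r : ℝ)) =
      Complex.exp (2*Real.pi*Complex.I*q*r) := by
  rw [Int.fract]
  push_cast
  rw [mul_sub, Complex.exp_sub,
    show (2*(Real.pi:ℂ)*Complex.I*q*(⌊r⌋:ℂ)) = 2*Real.pi*Complex.I*((q*⌊r⌋ : ℤ):ℂ) by push_cast; ring,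
    exp_int', div_one]

lemma geom_sum_exp' (p : ℕ) (hp : 0 < p) (a : ℤ) :
    ∑ k ∈ Finset.range p, Complex.exp (2*Real.pi*Complex.I*a*k/p) =
      if (p:ℤ) ∣ a then (p:ℂ) else 0 := by
  have hpc : (p:ℂ) ≠ 0 := Nat.cast_ne_zero.mpr hp.ne'
  set ω : ℂ := Complex.exp (2*Real.pi*Complex.I*a/p) with hω
  have hterm : ∀ k : ℕ, Complex.exp (2*Real.pi*Complex.I*a*k/p) = ω ^ k := by
    intro k
    rw [hω, ← Complex.exp_nat_mul]
    ring_nf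
  rw [Finset.sum_congr rfl fun k _ => hterm k]
  by_cases h : (p:ℤ) ∣ a
  · obtain ⟨b, rfl⟩ := h
    have hω1 : ω = 1 := by
      rw [hω, show (2*(Real.pi:ℂ)*Complex.I*((p*b:ℤ):ℂ)/p) = 2*Real.pi*Complex.I*(b:ℤ) by
        push_cast; field_simp, exp_int']
    simp [hω1, dvd_mul_right]
  · have h2 : (2*(Real.pi:ℂ)*Complex.I) ≠ 0 := by
      simp [Real.pi_ne_zero, Complex.I_ne_zero]
    have hω1 : ω ≠ 1 := by
      intro hc
      rw [hω, Complex.exp_eq_one_iff] at hc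
      obtain ⟨m, hm⟩ := hc
      apply h
      have h3 : (2*(Real.pi:ℂ)*Complex.I) * ((a:ℂ)/p) = (2*Real.pi*Complex.I) * m := by
        linear_combination hm
      have h4 : (a:ℂ)/p = m := mul_left_cancel₀ h2 h3
      field_simp at h4
      have h5 : a = m * p := by rw [mul_comm]; exact_mod_cast h4
      rw [h5]; exact dvd_mul_left _ _
    rw [geom_sum_eq hω1]
    have hωp : ω ^ p = 1 := by
      rw [hω, ← Complex.exp_nat_mul,
        show (p:ℂ)*(2*Real.pi*Complex.I*a/p) = 2*Real.pi*Complex.I*(a:ℤ) by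
          field_simp, exp_int']
    simp [hωp, h]

lemma Q_eval (d : ℕ) (hd : 0 < d) (n p : ℕ) (hp : 0 < p) (z : Fin d → ℤ)
    (a : ℕ → ℂ) (f : (Fin d → ℝ) → ℂ)
    (hf : ∀ x, f x = ∑ q ∈ Pset n,
      a q * Complex.exp (2 * (Real.pi : ℂ) * Complex.I * (q : ℂ) * (x ⟨0, hd⟩ : ℂ))) :
    Q d p z (fun _ => 0) f =
      ∑ q ∈ Pset n, a q * (if (p:ℤ) ∣ (q * z ⟨0, hd⟩) then 1 else 0) := by
  have hpc : (p:ℂ) ≠ 0 := Nat.cast_ne_zero.mpr hp.ne'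
  rw [Q]
  have key : ∀ k ∈ Finset.range p,
      (f fun j => Int.fract (((z j * k : ℤ) : ℝ) / p + 0)) =
        ∑ q ∈ Pset n, a q *
          Complex.exp (2*Real.pi*Complex.I*((q * z ⟨0, hd⟩ : ℤ):ℂ)*(k:ℂ)/(p:ℂ)) := by
    intro k _
    rw [hf]
    refine Finset.sum_congr rfl fun q _ => ?_
    congr 1
    rw [add_zero]
    rw [exp_fract' q (((z ⟨0, hd⟩ * k : ℤ) : ℝ) / p)]
    congr 1
    push_cast
    ring
  rw [Finset.sum_congr rfl key, Finset.sum_comm, Finset.mul_sum]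
  refine Finset.sum_congr rfl fun q _ => ?_
  rw [← Finset.mul_sum, geom_sum_exp' p hp (q * z ⟨0, hd⟩)]
  by_cases h : (p:ℤ) ∣ (q * z ⟨0, hd⟩)
  · simp only [h, if_pos]
    field_simp
  · simp [h]

lemma Pset_nonempty (n : ℕ) (hn : 2 ≤ n) : (Pset n).Nonempty := by
  obtain ⟨p, hp, h1, h2⟩ := Nat.bertrand (n/2) (by omega)
  refine ⟨p, ?_⟩
  simp only [Pset, Finset.mem_filter, Finset.mem_range]
  exact ⟨by omega, hp, by omega⟩

lemma rfun_eval (d : ℕ) (hd : 0 < d) (α : ℝ) (γ : Finset (Fin d) → ℝ) (q : ℕ) (hq : q ≠ 0) :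
    rfun d α γ (fun j => if j = ⟨0, hd⟩ then (q:ℤ) else 0) =
      (γ {⟨0, hd⟩})⁻¹ * (q:ℝ) ^ α := by
  have hfil : (Finset.univ.filter fun j : Fin d =>
      (if j = (⟨0, hd⟩ : Fin d) then (q:ℤ) else 0) ≠ 0) = {⟨0, hd⟩} := by
    ext j
    by_cases h : j = (⟨0, hd⟩ : Fin d) <;> simp [h, hq]
  rw [rfun, hfil, Finset.prod_singleton]
  simp [abs_of_nonneg (by positivity : (0:ℝ) ≤ (q:ℝ))]

theorem stmt18 (d : ℕ) (hd : 0 < d) (α : ℝ) (hα : 0 ≤ α) (γ : Finset (Fin d) → ℝ)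
    (hγ : ∀ u, 0 < γ u) (n : ℕ) (hn : 2 ≤ n) (C2 : ℝ) (hC2 : 0 < C2)
    (hPhigh : ((Pset n).card : ℝ) ≤ C2 * n / Real.log n)
    (z : Fin d → ℤ) (f : (Fin d → ℝ) → ℂ)
    (hf : ∀ x, f x = ∑ q ∈ Pset n,
      (((rfun d α γ (fun j => if j = ⟨0, hd⟩ then (q : ℤ) else 0) *
          Real.sqrt ((Pset n).card) : ℝ) : ℂ))⁻¹ *
        Complex.exp (2 * (Real.pi : ℂ) * Complex.I * (q : ℂ) * (x ⟨0, hd⟩ : ℂ))) :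
    γ {⟨0, hd⟩} * Real.sqrt (Real.log n) / (Real.sqrt C2 * (n : ℝ) ^ (α + 1 / 2))
      ≤ (1 / ((Pset n).card : ℝ)) *
          ∑ p ∈ Pset n, ‖Q d p z (fun _ => 0) f‖ := by
  classical
  set i0 : Fin d := ⟨0, hd⟩
  set L := Real.log n with hLdef
  have hcard : 0 < (Pset n).card := Finset.card_pos.mpr (Pset_nonempty n hn)
  have hNR : (0:ℝ) < ((Pset n).card : ℝ) := by exact_mod_cast hcard
  have hn1 : (1:ℝ) < (n:ℝ) := by exact_mod_cast hn.trans_lt' one_lt_two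
  have hL : 0 < L := Real.log_pos hn1
  have hγ1 : 0 < γ {i0} := hγ _
  have hsqrtN : 0 < Real.sqrt ((Pset n).card) := Real.sqrt_pos.mpr hNR
  -- coefficients
  set c : ℕ → ℝ := fun q =>
    (rfun d α γ (fun j => if j = i0 then (q:ℤ) else 0) * Real.sqrt ((Pset n).card))⁻¹
    with hcdef
  have hmem : ∀ q ∈ Pset n, q.Prime ∧ q ≤ n ∧ n < 2 * q := by
    intro q hq
    simp only [Pset, Finset.mem_filter, Finset.mem_range] at hq
    exact ⟨hq.2.1, by omega, hq.2.2⟩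
  have hcval : ∀ q ∈ Pset n, c q = γ {i0} / ((q:ℝ) ^ α * Real.sqrt ((Pset n).card)) := by
    intro q hq
    rw [hcdef]
    simp only
    rw [rfun_eval d hd α γ q (hmem q hq).1.ne_zero]
    rw [mul_assoc, mul_inv, inv_inv]
    rw [div_eq_mul_inv]
  have hcpos : ∀ q ∈ Pset n, 0 < c q := by
    intro q hq
    rw [hcval q hq]
    have := (hmem q hq).1.pos
    have hq0 : (0:ℝ) < (q:ℝ) := by exact_mod_cast this
    positivity
  -- lower bound constant
  set LB := γ {i0} * Real.sqrt L / (Real.sqrt C2 * (n:ℝ) ^ (α + 1/2)) with hLBdef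
  have hnpos : (0:ℝ) < (n:ℝ) := by positivity
  have hrpow : (0:ℝ) < (n:ℝ) ^ (α + 1/2) := Real.rpow_pos_of_pos hnpos _
  -- step: LB ≤ c p for p ∈ Pset n
  have hLBc : ∀ p ∈ Pset n, LB ≤ c p := by
    intro p hp
    obtain ⟨hpp, hpn, -⟩ := hmem p hp
    have hp0 : (0:ℝ) < (p:ℝ) := by exact_mod_cast hpp.pos
    rw [hcval p hp, hLBdef]
    have hden : 0 < (p:ℝ) ^ α * Real.sqrt ((Pset n).card) := by positivity
    rw [div_le_div_iff₀ (by positivity) hden]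
    have key : Real.sqrt L * ((p:ℝ) ^ α * Real.sqrt ((Pset n).card))
        ≤ Real.sqrt C2 * (n:ℝ) ^ (α + 1/2) := by
      have h1 : (p:ℝ) ^ α ≤ (n:ℝ) ^ α :=
        Real.rpow_le_rpow hp0.le (by exact_mod_cast hpn) hα
      have h2 : Real.sqrt ((Pset n).card) ≤ Real.sqrt (C2 * n / L) :=
        Real.sqrt_le_sqrt hPhigh
      have h3 : Real.sqrt L * ((p:ℝ) ^ α * Real.sqrt ((Pset n).card))
          ≤ Real.sqrt L * ((n:ℝ) ^ α * Real.sqrt (C2 * n / L)) := by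
        gcongr
      have e1 : Real.sqrt L * Real.sqrt (C2 * n / L) = Real.sqrt C2 * Real.sqrt n := by
        rw [← Real.sqrt_mul hL.le, show L * (C2 * (n:ℝ) / L) = C2 * n by field_simp,
          Real.sqrt_mul hC2.le]
      have e2 : (n:ℝ) ^ (α + 1/2) = (n:ℝ) ^ α * Real.sqrt n := by
        rw [Real.rpow_add hnpos, ← Real.sqrt_eq_rpow]
      refine h3.trans_eq ?_
      rw [e2]
      linear_combination (n:ℝ) ^ α * e1
    calc γ {i0} * Real.sqrt L * ((p:ℝ) ^ α * Real.sqrt ((Pset n).card))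
        = γ {i0} * (Real.sqrt L * ((p:ℝ) ^ α * Real.sqrt ((Pset n).card))) := by ring
      _ ≤ γ {i0} * (Real.sqrt C2 * (n:ℝ) ^ (α + 1/2)) := by
          exact mul_le_mul_of_nonneg_left key hγ1.le
      _ = γ {i0} * (Real.sqrt C2 * (n:ℝ) ^ (α + 1/2)) := rfl
  -- step: c p ≤ |Q p|
  have hQabs : ∀ p ∈ Pset n, c p ≤ ‖Q d p z (fun _ => 0) f‖ := by
    intro p hp
    have hppos : 0 < p := (hmem p hp).1.pos
    have hf' : ∀ x, f x = ∑ q ∈ Pset n,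
        ((c q : ℝ) : ℂ) * Complex.exp (2 * (Real.pi : ℂ) * Complex.I * (q : ℂ) * (x i0 : ℂ)) := by
      intro x
      rw [hf x]
      refine Finset.sum_congr rfl fun q _ => ?_
      rw [hcdef]
      simp only
      rw [Complex.ofReal_inv]
    have hQ := Q_eval d hd n p hppos z (fun q => ((c q : ℝ) : ℂ)) f hf'
    have hre : (Q d p z (fun _ => 0) f).re
        = ∑ q ∈ Pset n, (if (p:ℤ) ∣ (q * z i0) then c q else 0) := by
      rw [hQ, Complex.re_sum]
      refine Finset.sum_congr rfl fun q _ => ?_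
      split_ifs with h <;> simp [h]
    have hge : c p ≤ (Q d p z (fun _ => 0) f).re := by
      rw [hre]
      have hterm : (if (p:ℤ) ∣ ((p:ℤ) * z i0) then c p else 0) = c p := by
        rw [if_pos (dvd_mul_right _ _)]
      calc c p = (if (p:ℤ) ∣ ((p:ℤ) * z i0) then c p else 0) := hterm.symm
        _ ≤ ∑ q ∈ Pset n, (if (p:ℤ) ∣ (q * z i0) then c q else 0) := by
            refine Finset.single_le_sum
              (f := fun q : ℕ => if (p:ℤ) ∣ ((q:ℤ) * z i0) then c q else 0)
              (fun q hq => ?_) hp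
            split_ifs with h
            · exact (hcpos q hq).le
            · exact le_rfl
    exact hge.trans (Complex.re_le_norm _)
  -- conclude
  have hsum : ((Pset n).card : ℝ) * LB
      ≤ ∑ p ∈ Pset n, ‖Q d p z (fun _ => 0) f‖ := by
    calc ((Pset n).card : ℝ) * LB = ∑ _p ∈ Pset n, LB := by
          rw [Finset.sum_const, nsmul_eq_mul]
      _ ≤ ∑ p ∈ Pset n, ‖Q d p z (fun _ => 0) f‖ :=
          Finset.sum_le_sum fun p hp => (hLBc p hp).trans (hQabs p hp)
  have heq : LB = (1 / ((Pset n).card : ℝ)) * (((Pset n).card : ℝ) * LB) := by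
    field_simp
  refine le_trans (le_of_eq heq) ?_
  exact mul_le_mul_of_nonneg_left hsum (one_div_pos.mpr hNR).le
end
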